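/- arXiv:2206.00080 — 6 statements merged into one kernel-verified Lean document; each statement's English description precedes it below -/
import Mathlib

section
/- Conditional portmanteau lemma: The following are equivalent: (1) X_m | F_m converges in distribution to X as m → ∞; (2) for every bounded Lipschitz function f : 𝒳 → ℝ, E[f(X_m) | F_m] → E[f(X)] almost surely as m → ∞; (3) for every measurable set A ⊆ 𝒳 with P[X ∈ ∂A] = 0 (∂A the topological boundary of A), P[X_m ∈ A | F_m] → P[X ∈ A] almost surely as m → ∞. -/
open MeasureTheory Filter Topology

/-- `X_m | F_m` converges in distribution to `X'`: for every bounded continuous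
`f : 𝒳 → ℝ`, `E[f(X_m) | F_m] → E[f(X')]` almost surely as `m → ∞`. -/
def CondConvD {Ω 𝒳 : Type*} [MeasurableSpace Ω] [MeasurableSpace 𝒳] [MetricSpace 𝒳]
    (P : Measure Ω) (F : ℕ → MeasurableSpace Ω) (X : ℕ → Ω → 𝒳) (X' : Ω → 𝒳) : Prop :=
  ∀ f : 𝒳 → ℝ, Continuous f → (∃ C, ∀ x, |f x| ≤ C) →
    ∀ᵐ ω ∂P, Tendsto (fun m => (P[(fun ω' => f (X m ω')) | F m]) ω) atTop
      (𝓝 (∫ ω', f (X' ω') ∂P))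

/-- Deterministic sandwich lemma. -/
lemma aux_sandwich (u : ℕ → ℝ) (L : ℝ)
    (h : ∀ ε : ℝ, 0 < ε →
      (∃ (v : ℕ → ℝ) (M : ℝ), Tendsto v atTop (𝓝 M) ∧ (∀ m, u m ≤ v m) ∧ M ≤ L + ε) ∧
      (∃ (w : ℕ → ℝ) (M' : ℝ), Tendsto w atTop (𝓝 M') ∧ (∀ m, w m ≤ u m) ∧ L - ε ≤ M')) :
    Tendsto u atTop (𝓝 L) := by
  rw [Metric.tendsto_atTop]
  intro ε hε
  obtain ⟨⟨v, M, hv, huv, hM⟩, ⟨w, M', hw, hwu, hM'⟩⟩ := h (ε / 4) (by linarith)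
  obtain ⟨N1, h1⟩ := Metric.tendsto_atTop.1 hv (ε / 4) (by linarith)
  obtain ⟨N2, h2⟩ := Metric.tendsto_atTop.1 hw (ε / 4) (by linarith)
  refine ⟨max N1 N2, fun m hm => ?_⟩
  have e1 := h1 m (le_trans (le_max_left _ _) hm)
  have e2 := h2 m (le_trans (le_max_right _ _) hm)
  rw [Real.dist_eq, abs_lt] at e1 e2 ⊢
  have := huv m; have := hwu m
  constructor <;> linarith

/-- A bounded measurable composition is integrable w.r.t. a finite measure. -/
lemma aux_integrable {Ω 𝒳 : Type*} [MeasurableSpace Ω] [MeasurableSpace 𝒳]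
    (P : Measure Ω) [IsFiniteMeasure P] (g : 𝒳 → ℝ) (hg : Measurable g)
    (Y : Ω → 𝒳) (hY : Measurable Y) (C : ℝ) (hC : ∀ x, |g x| ≤ C) :
    Integrable (fun ω => g (Y ω)) P :=
  Integrable.mono' (integrable_const C) ((hg.comp hY).aestronglyMeasurable)
    (ae_of_all _ fun ω => by rw [Real.norm_eq_abs]; exact hC _)

/-- Lipschitz upper thickened indicator. -/
lemma aux_infDist_abs {𝒳 : Type*} [MetricSpace 𝒳] (S : Set 𝒳) (x y : 𝒳) :
    |Metric.infDist x S - Metric.infDist y S| ≤ dist x y := by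
  have := (Metric.lipschitz_infDist_pt S).dist_le_mul x y
  rwa [NNReal.coe_one, one_mul, Real.dist_eq] at this

lemma aux_lip_max {𝒳 : Type*} [MetricSpace 𝒳] (c : ℝ) (hc : 0 ≤ c) (S : Set 𝒳) :
    LipschitzWith (Real.toNNReal c) (fun x => max (1 - c * Metric.infDist x S) 0) := by
  apply LipschitzWith.of_dist_le_mul
  intro x y
  rw [Real.dist_eq]
  have key : (1 - c * Metric.infDist x S) - (1 - c * Metric.infDist y S)
      = c * (Metric.infDist y S - Metric.infDist x S) := by ring
  calc |max (1 - c * Metric.infDist x S) 0 - max (1 - c * Metric.infDist y S) 0|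
      ≤ |(1 - c * Metric.infDist x S) - (1 - c * Metric.infDist y S)| :=
        abs_max_sub_max_le_abs _ _ _
    _ = c * |Metric.infDist y S - Metric.infDist x S| := by
        rw [key, abs_mul, abs_of_nonneg hc]
    _ ≤ (Real.toNNReal c) * dist x y := by
        rw [Real.coe_toNNReal c hc]
        have h1 : |Metric.infDist y S - Metric.infDist x S| ≤ dist x y := by
          rw [dist_comm]; exact aux_infDist_abs S y x
        exact mul_le_mul_of_nonneg_left h1 hc

lemma aux_lip_min {𝒳 : Type*} [MetricSpace 𝒳] (c : ℝ) (hc : 0 ≤ c) (S : Set 𝒳) :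
    LipschitzWith (Real.toNNReal c) (fun x => min (c * Metric.infDist x S) 1) := by
  apply LipschitzWith.of_dist_le_mul
  intro x y
  rw [Real.dist_eq]
  calc |min (c * Metric.infDist x S) 1 - min (c * Metric.infDist y S) 1|
      ≤ |c * Metric.infDist x S - c * Metric.infDist y S| :=
        by
          have := abs_min_sub_min_le_max (c * Metric.infDist x S) 1 (c * Metric.infDist y S) 1
          simpa using this
    _ = c * |Metric.infDist x S - Metric.infDist y S| := by
        rw [← mul_sub, abs_mul, abs_of_nonneg hc]
    _ ≤ (Real.toNNReal c) * dist x y := by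
        rw [Real.coe_toNNReal c hc]
        exact mul_le_mul_of_nonneg_left (aux_infDist_abs S x y) hc

lemma aux_integral_indicator {Ω 𝒳 : Type*} [MeasurableSpace Ω] [MeasurableSpace 𝒳]
    (P : Measure Ω) (S : Set 𝒳) (hS : MeasurableSet S) (Y : Ω → 𝒳) (hY : Measurable Y) :
    ∫ ω, Set.indicator S (fun _ => (1 : ℝ)) (Y ω) ∂P = (P (Y ⁻¹' S)).toReal := by
  have heq : (fun ω => Set.indicator S (fun _ => (1 : ℝ)) (Y ω))
      = Set.indicator (Y ⁻¹' S) (fun _ => (1 : ℝ)) := by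
    ext ω
    by_cases h : Y ω ∈ S
    · simp [Set.indicator_apply, h]
    · simp [Set.indicator_apply, h]
  rw [heq, integral_indicator_const _ (hY hS), smul_eq_mul, mul_one]; rfl

lemma aux_measure_closure {Ω 𝒳 : Type*} [MeasurableSpace Ω] [MeasurableSpace 𝒳]
    [TopologicalSpace 𝒳] (P : Measure Ω) (A : Set 𝒳) (X' : Ω → 𝒳)
    (hfr : P (X' ⁻¹' frontier A) = 0) :
    P (X' ⁻¹' closure A) = P (X' ⁻¹' A) := by
  refine le_antisymm ?_ (measure_mono (Set.preimage_mono subset_closure))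
  calc P (X' ⁻¹' closure A) ≤ P (X' ⁻¹' A ∪ X' ⁻¹' frontier A) := by
        refine measure_mono ?_
        rw [← Set.preimage_union]
        exact Set.preimage_mono (by rw [closure_eq_self_union_frontier])
    _ ≤ P (X' ⁻¹' A) + P (X' ⁻¹' frontier A) := measure_union_le _ _
    _ = P (X' ⁻¹' A) := by rw [hfr, add_zero]

lemma aux_measure_interior {Ω 𝒳 : Type*} [MeasurableSpace Ω] [MeasurableSpace 𝒳]
    [TopologicalSpace 𝒳] (P : Measure Ω) (A : Set 𝒳) (X' : Ω → 𝒳)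
    (hfr : P (X' ⁻¹' frontier A) = 0) :
    P (X' ⁻¹' interior A) = P (X' ⁻¹' A) := by
  refine le_antisymm (measure_mono (Set.preimage_mono interior_subset)) ?_
  calc P (X' ⁻¹' A) ≤ P (X' ⁻¹' interior A ∪ X' ⁻¹' frontier A) := by
        refine measure_mono ?_
        rw [← Set.preimage_union]
        refine Set.preimage_mono ?_
        intro x hx
        by_cases hi : x ∈ interior A
        · exact Or.inl hi
        · exact Or.inr ⟨subset_closure hx, hi⟩
    _ ≤ P (X' ⁻¹' interior A) + P (X' ⁻¹' frontier A) := measure_union_le _ _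
    _ = P (X' ⁻¹' interior A) := by rw [hfr, add_zero]

lemma aux_two_to_three {Ω 𝒳 : Type*} [MeasurableSpace Ω] [MeasurableSpace 𝒳] [MetricSpace 𝒳]
    [BorelSpace 𝒳] (P : Measure Ω) [IsProbabilityMeasure P]
    (F : ℕ → MeasurableSpace Ω) (hle : ∀ m, F m ≤ (inferInstance : MeasurableSpace Ω))
    (X : ℕ → Ω → 𝒳) (X' : Ω → 𝒳) (hX : ∀ m, Measurable (X m)) (hX' : Measurable X')
    (h2 : ∀ f : 𝒳 → ℝ, (∃ K : NNReal, LipschitzWith K f) → (∃ C, ∀ x, |f x| ≤ C) →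
        ∀ᵐ ω ∂P, Tendsto (fun m => (P[(fun ω' => f (X m ω')) | F m]) ω) atTop
          (𝓝 (∫ ω', f (X' ω') ∂P)))
    (A : Set 𝒳) (hA : MeasurableSet A) (hfr : P (X' ⁻¹' frontier A) = 0) :
    ∀ᵐ ω ∂P, Tendsto
      (fun m => (P[(fun ω' => Set.indicator A (fun _ => (1 : ℝ)) (X m ω')) | F m]) ω)
      atTop (𝓝 (P (X' ⁻¹' A)).toReal) := by
  classical
  by_cases hAe : A = ∅
  · subst hAe
    simp only [Set.indicator_empty, Set.preimage_empty, measure_empty, ENNReal.toReal_zero]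
    refine ae_of_all _ fun ω => ?_
    have : ∀ m, (P[(fun _ : Ω => (0 : ℝ)) | F m]) = fun _ => (0 : ℝ) := fun m =>
      condExp_const (hle m) 0
    simp only [this]
    exact tendsto_const_nhds
  by_cases hAu : A = Set.univ
  · subst hAu
    simp only [Set.indicator_univ, Set.preimage_univ, measure_univ, ENNReal.toReal_one]
    refine ae_of_all _ fun ω => ?_
    have : ∀ m, (P[(fun _ : Ω => (1 : ℝ)) | F m]) = fun _ => (1 : ℝ) := fun m =>
      condExp_const (hle m) 1
    simp only [this]
    exact tendsto_const_nhds
  have hAne : (closure A).Nonempty := (Set.nonempty_iff_ne_empty.2 hAe).closure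
  have hIne : ((interior A)ᶜ).Nonempty := by
    rw [Set.nonempty_compl]
    intro h
    exact hAu (Set.eq_univ_of_univ_subset (h ▸ interior_subset))
  set L := (P (X' ⁻¹' A)).toReal with hL
  set g : ℕ → 𝒳 → ℝ := fun k x => max (1 - ((k : ℝ) + 1) * Metric.infDist x (closure A)) 0
    with hgdef
  set h : ℕ → 𝒳 → ℝ := fun k x => min (((k : ℝ) + 1) * Metric.infDist x ((interior A)ᶜ)) 1
    with hhdef
  have hglip : ∀ k : ℕ, LipschitzWith (Real.toNNReal ((k : ℝ) + 1)) (g k) := by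
    intro k
    simp only [hgdef]
    exact aux_lip_max _ (by positivity) _
  have hhlip : ∀ k : ℕ, LipschitzWith (Real.toNNReal ((k : ℝ) + 1)) (h k) := by
    intro k
    simp only [hhdef]
    exact aux_lip_min _ (by positivity) _
  have hg0 : ∀ k x, 0 ≤ g k x := fun k x => le_max_right _ _
  have hg1 : ∀ k x, g k x ≤ 1 := fun k x => by
    refine max_le ?_ zero_le_one
    have : 0 ≤ ((k : ℝ) + 1) * Metric.infDist x (closure A) :=
      mul_nonneg (by positivity) Metric.infDist_nonneg
    linarith
  have hgabs : ∀ k x, |g k x| ≤ 1 := fun k x => abs_le.2 ⟨by linarith [hg0 k x], hg1 k x⟩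
  have hh0 : ∀ k x, 0 ≤ h k x := fun k x =>
    le_min (mul_nonneg (by positivity) Metric.infDist_nonneg) zero_le_one
  have hh1 : ∀ k x, h k x ≤ 1 := fun k x => min_le_right _ _
  have hhabs : ∀ k x, |h k x| ≤ 1 := fun k x => abs_le.2 ⟨by linarith [hh0 k x], hh1 k x⟩
  have hind_bdd : ∀ x, |Set.indicator A (fun _ => (1 : ℝ)) x| ≤ 1 := by
    intro x; by_cases hx : x ∈ A <;> simp [Set.indicator_apply, hx]
  have h_le_g : ∀ k x, Set.indicator A (fun _ => (1 : ℝ)) x ≤ g k x := by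
    intro k x
    by_cases hx : x ∈ A
    · rw [Set.indicator_of_mem hx]
      have h0 : Metric.infDist x (closure A) = 0 :=
        Metric.infDist_zero_of_mem (subset_closure hx)
      simp [hgdef, h0]
    · rw [Set.indicator_of_notMem hx]; exact hg0 k x
  have h_h_le : ∀ k x, h k x ≤ Set.indicator A (fun _ => (1 : ℝ)) x := by
    intro k x
    by_cases hx : x ∈ A
    · rw [Set.indicator_of_mem hx]; exact hh1 k x
    · rw [Set.indicator_of_notMem hx]
      have hxi : x ∈ (interior A)ᶜ := fun hc => hx (interior_subset hc)
      have h0 : Metric.infDist x ((interior A)ᶜ) = 0 := Metric.infDist_zero_of_mem hxi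
      simp [hhdef, h0]
  -- pointwise limits
  have tendsto_g_ptw : ∀ x, Tendsto (fun k => g k x) atTop
      (𝓝 (Set.indicator (closure A) (fun _ => (1 : ℝ)) x)) := by
    intro x
    by_cases hx : x ∈ closure A
    · rw [Set.indicator_of_mem hx]
      have h0 : Metric.infDist x (closure A) = 0 := Metric.infDist_zero_of_mem hx
      have heq : ∀ k : ℕ, g k x = 1 := fun k => by simp [hgdef, h0]
      exact Tendsto.congr (fun k => (heq k).symm) tendsto_const_nhds
    · rw [Set.indicator_of_notMem hx]
      have hd : 0 < Metric.infDist x (closure A) :=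
        (isClosed_closure.notMem_iff_infDist_pos hAne).1 hx
      obtain ⟨K, hK⟩ := exists_nat_gt (1 / Metric.infDist x (closure A))
      refine tendsto_atTop_of_eventually_const (i₀ := K) fun k hk => ?_
      have h1 : (1 : ℝ) ≤ ((k : ℝ) + 1) * Metric.infDist x (closure A) := by
        rw [div_lt_iff₀ hd] at hK
        have : (K : ℝ) ≤ (k : ℝ) := Nat.cast_le.2 hk
        nlinarith [hd]
      simp [hgdef, max_eq_right (by linarith : 1 - ((k : ℝ) + 1) * Metric.infDist x (closure A) ≤ 0)]
  have tendsto_h_ptw : ∀ x, Tendsto (fun k => h k x) atTop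
      (𝓝 (Set.indicator (interior A) (fun _ => (1 : ℝ)) x)) := by
    intro x
    by_cases hx : x ∈ interior A
    · rw [Set.indicator_of_mem hx]
      have hd : 0 < Metric.infDist x ((interior A)ᶜ) :=
        (isOpen_interior.isClosed_compl.notMem_iff_infDist_pos hIne).1 (by simpa using hx)
      obtain ⟨K, hK⟩ := exists_nat_gt (1 / Metric.infDist x ((interior A)ᶜ))
      refine tendsto_atTop_of_eventually_const (i₀ := K) fun k hk => ?_
      have h1 : (1 : ℝ) ≤ ((k : ℝ) + 1) * Metric.infDist x ((interior A)ᶜ) := by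
        rw [div_lt_iff₀ hd] at hK
        have : (K : ℝ) ≤ (k : ℝ) := Nat.cast_le.2 hk
        nlinarith [hd]
      simp [hhdef, min_eq_right h1]
    · rw [Set.indicator_of_notMem hx]
      have h0 : Metric.infDist x ((interior A)ᶜ) = 0 := Metric.infDist_zero_of_mem hx
      have heq : ∀ k : ℕ, h k x = 0 := fun k => by simp [hhdef, h0]
      exact Tendsto.congr (fun k => (heq k).symm) tendsto_const_nhds
  -- integral convergence
  have tendsto_int_g : Tendsto (fun k => ∫ ω', g k (X' ω') ∂P) atTop (𝓝 L) := by
    have hDC := tendsto_integral_of_dominated_convergence (μ := P)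
      (F := fun k ω => g k (X' ω))
      (f := fun ω => Set.indicator (closure A) (fun _ => (1 : ℝ)) (X' ω)) (fun _ => 1)
      (fun k => (((hglip k).continuous.measurable).comp hX').aestronglyMeasurable)
      (integrable_const 1)
      (fun k => ae_of_all _ fun ω => by rw [Real.norm_eq_abs]; exact hgabs k _)
      (ae_of_all _ fun ω => tendsto_g_ptw (X' ω))
    rwa [aux_integral_indicator P _ isClosed_closure.measurableSet X' hX',
      aux_measure_closure P A X' hfr] at hDC
  have tendsto_int_h : Tendsto (fun k => ∫ ω', h k (X' ω') ∂P) atTop (𝓝 L) := by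
    have hDC := tendsto_integral_of_dominated_convergence (μ := P)
      (F := fun k ω => h k (X' ω))
      (f := fun ω => Set.indicator (interior A) (fun _ => (1 : ℝ)) (X' ω)) (fun _ => 1)
      (fun k => (((hhlip k).continuous.measurable).comp hX').aestronglyMeasurable)
      (integrable_const 1)
      (fun k => ae_of_all _ fun ω => by rw [Real.norm_eq_abs]; exact hhabs k _)
      (ae_of_all _ fun ω => tendsto_h_ptw (X' ω))
    rwa [aux_integral_indicator P _ isOpen_interior.measurableSet X' hX',
      aux_measure_interior P A X' hfr] at hDC
  -- conditional expectation inequalities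
  have int_ind : ∀ m, Integrable (fun ω' => Set.indicator A (fun _ => (1 : ℝ)) (X m ω')) P :=
    fun m => aux_integrable P _ (measurable_const.indicator hA) (X m) (hX m) 1 hind_bdd
  have int_gm : ∀ k m, Integrable (fun ω' => g k (X m ω')) P :=
    fun k m => aux_integrable P _ (hglip k).continuous.measurable (X m) (hX m) 1 (hgabs k)
  have int_hm : ∀ k m, Integrable (fun ω' => h k (X m ω')) P :=
    fun k m => aux_integrable P _ (hhlip k).continuous.measurable (X m) (hX m) 1 (hhabs k)
  have hle1 : ∀ k m, (P[(fun ω' => Set.indicator A (fun _ => (1 : ℝ)) (X m ω')) | F m])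
      ≤ᵐ[P] (P[(fun ω' => g k (X m ω')) | F m]) :=
    fun k m => condExp_mono (int_ind m) (int_gm k m) (ae_of_all _ fun ω' => h_le_g k (X m ω'))
  have hle2 : ∀ k m, (P[(fun ω' => h k (X m ω')) | F m])
      ≤ᵐ[P] (P[(fun ω' => Set.indicator A (fun _ => (1 : ℝ)) (X m ω')) | F m]) :=
    fun k m => condExp_mono (int_hm k m) (int_ind m) (ae_of_all _ fun ω' => h_h_le k (X m ω'))
  have hg_t : ∀ k, ∀ᵐ ω ∂P, Tendsto (fun m => (P[(fun ω' => g k (X m ω')) | F m]) ω) atTop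
      (𝓝 (∫ ω', g k (X' ω') ∂P)) :=
    fun k => h2 (g k) ⟨_, hglip k⟩ ⟨1, hgabs k⟩
  have hh_t : ∀ k, ∀ᵐ ω ∂P, Tendsto (fun m => (P[(fun ω' => h k (X m ω')) | F m]) ω) atTop
      (𝓝 (∫ ω', h k (X' ω') ∂P)) :=
    fun k => h2 (h k) ⟨_, hhlip k⟩ ⟨1, hhabs k⟩
  filter_upwards [ae_all_iff.2 hg_t, ae_all_iff.2 hh_t,
    ae_all_iff.2 fun k => ae_all_iff.2 fun m => hle1 k m,
    ae_all_iff.2 fun k => ae_all_iff.2 fun m => hle2 k m] with ω H1 H2 H3 H4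
  apply aux_sandwich
  intro ε hε
  constructor
  · obtain ⟨k, hk⟩ :=
      (tendsto_int_g.eventually (eventually_le_nhds (lt_add_of_pos_right L hε))).exists
    exact ⟨fun m => (P[(fun ω' => g k (X m ω')) | F m]) ω, ∫ ω', g k (X' ω') ∂P, H1 k,
      fun m => H3 k m, hk⟩
  · obtain ⟨k, hk⟩ :=
      (tendsto_int_h.eventually (eventually_ge_nhds (by linarith : L - ε < L))).exists
    exact ⟨fun m => (P[(fun ω' => h k (X m ω')) | F m]) ω, ∫ ω', h k (X' ω') ∂P, H2 k,
      fun m => H4 k m, hk⟩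

lemma aux_grid {n : ℕ} (a δ : ℝ) (hδ : 0 < δ) (t : Fin (n + 1) → ℝ)
    (ht1 : ∀ i : Fin (n + 1), a + (i : ℕ) * δ < t i)
    (ht2 : ∀ i : Fin (n + 1), t i < a + ((i : ℕ) + 1) * δ)
    (y : ℝ) (hy1 : a < y) (hy2 : y < a + ((n : ℝ) + 1) * δ) :
    |a + δ * ((Finset.univ.filter (fun i : Fin (n + 1) => t i < y)).card : ℝ) - y| ≤ δ := by
  classical
  set S := Finset.univ.filter (fun i : Fin (n + 1) => t i < y) with hS
  set k := S.card with hk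
  have hkN : k ≤ n + 1 := by
    have := Finset.card_filter_le (Finset.univ : Finset (Fin (n + 1)))
      (fun i => t i < y)
    simpa [hS, hk] using this
  have htmono : ∀ i j : Fin (n + 1), (i : ℕ) < (j : ℕ) → t i < t j := by
    intro i j hij
    have h1 := ht2 i
    have h2 := ht1 j
    have hcast : ((i : ℕ) : ℝ) + 1 ≤ ((j : ℕ) : ℝ) := by exact_mod_cast hij
    nlinarith
  have upper : y < a + ((k : ℝ) + 1) * δ := by
    rcases Nat.lt_or_ge k (n + 1) with hkn | hkn
    · set j : Fin (n + 1) := ⟨k, hkn⟩ with hj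
      have hjy : ¬ t j < y := by
        intro hjy
        have hsub : ∀ i : ℕ, i ∈ Finset.range (k + 1) →
            (⟨min i k, lt_of_le_of_lt (min_le_right _ _) hkn⟩ : Fin (n + 1)) ∈ S := by
          intro i hi
          rw [Finset.mem_range] at hi
          have hik : i ≤ k := Nat.lt_succ_iff.1 hi
          have hmin : min i k = i := min_eq_left hik
          rw [hS, Finset.mem_filter]
          refine ⟨Finset.mem_univ _, ?_⟩
          rcases Nat.lt_or_ge i k with hlt | hge
          · refine lt_trans (htmono _ j ?_) hjy
            simp [hmin, hlt, hj]
          · have hieq : i = k := le_antisymm hik hge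
            have : (⟨min i k, lt_of_le_of_lt (min_le_right _ _) hkn⟩ : Fin (n + 1)) = j := by
              apply Fin.ext; simp [hmin, hieq, hj]
            rw [this]; exact hjy
        have hinj : Set.InjOn
            (fun i : ℕ => (⟨min i k, lt_of_le_of_lt (min_le_right _ _) hkn⟩ : Fin (n + 1)))
            (Finset.range (k + 1) : Set ℕ) := by
          intro i hi i' hi' hii
          simp only [Finset.coe_range, Set.mem_Iio] at hi hi'
          have h1 : min i k = i := min_eq_left (Nat.lt_succ_iff.1 hi)
          have h2 : min i' k = i' := min_eq_left (Nat.lt_succ_iff.1 hi')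
          have := congrArg Fin.val hii
          simpa [h1, h2] using this
        have := Finset.card_le_card_of_injOn _ hsub hinj
        simp only [Finset.card_range] at this
        omega
      push_neg at hjy
      have := ht2 j
      have hjval : ((j : ℕ) : ℝ) = (k : ℝ) := by simp [hj]
      calc y ≤ t j := hjy
        _ < a + (((j : ℕ) : ℝ) + 1) * δ := this
        _ = a + ((k : ℝ) + 1) * δ := by rw [hjval]
    · have hk' : ((n : ℝ) + 1) ≤ (k : ℝ) := by exact_mod_cast hkn
      nlinarith
  have lower : a + ((k : ℝ) - 1) * δ < y := by
    rcases Nat.eq_zero_or_pos k with hk0 | hk0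
    · rw [hk0]; push_cast; nlinarith
    · have hex : ∃ i ∈ S, k ≤ (i : ℕ) + 1 := by
        by_contra hcon
        push_neg at hcon
        have hsub : ∀ i ∈ S, (i : ℕ) ∈ Finset.range (k - 1) := by
          intro i hi
          rw [Finset.mem_range]
          have := hcon i hi
          omega
        have hinj : Set.InjOn (fun i : Fin (n + 1) => (i : ℕ)) (S : Set (Fin (n + 1))) :=
          fun i _ j _ h => Fin.val_injective h
        have := Finset.card_le_card_of_injOn _ hsub hinj
        simp only [Finset.card_range] at this
        omega
      obtain ⟨i, hiS, hik⟩ := hex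
      have h1 : t i < y := by
        rw [hS, Finset.mem_filter] at hiS
        exact hiS.2
      have h2 := ht1 i
      have h3 : (k : ℝ) - 1 ≤ ((i : ℕ) : ℝ) := by
        have : (k : ℝ) ≤ ((i : ℕ) : ℝ) + 1 := by exact_mod_cast hik
        linarith
      nlinarith
  rw [abs_le]
  constructor <;> nlinarith

lemma aux_three_to_one {Ω 𝒳 : Type*} [MeasurableSpace Ω] [MeasurableSpace 𝒳] [MetricSpace 𝒳]
    [BorelSpace 𝒳] (P : Measure Ω) [IsProbabilityMeasure P]
    (F : ℕ → MeasurableSpace Ω) (hle : ∀ m, F m ≤ (inferInstance : MeasurableSpace Ω))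
    (X : ℕ → Ω → 𝒳) (X' : Ω → 𝒳) (hX : ∀ m, Measurable (X m)) (hX' : Measurable X')
    (h3 : ∀ A : Set 𝒳, MeasurableSet A → P (X' ⁻¹' frontier A) = 0 →
        ∀ᵐ ω ∂P, Tendsto
          (fun m => (P[(fun ω' => Set.indicator A (fun _ => (1 : ℝ)) (X m ω')) | F m]) ω)
          atTop (𝓝 (P (X' ⁻¹' A)).toReal))
    (f : 𝒳 → ℝ) (hf : Continuous f) (hfb : ∃ C, ∀ x, |f x| ≤ C) :
    ∀ᵐ ω ∂P, Tendsto (fun m => (P[(fun ω' => f (X m ω')) | F m]) ω) atTop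
      (𝓝 (∫ ω', f (X' ω') ∂P)) := by
  classical
  obtain ⟨C₀, hC₀⟩ := hfb
  set C := |C₀| with hCdef
  have hC0 : 0 ≤ C := abs_nonneg _
  have hfC : ∀ x, |f x| ≤ C := fun x => (hC₀ x).trans (le_abs_self C₀)
  set a : ℝ := -(C + 1) with hadef
  set δ : ℕ → ℝ := fun n => (2 * C + 2) / ((n : ℝ) + 1) with hδdef
  have hδpos : ∀ n, 0 < δ n := fun n => div_pos (by linarith) (by positivity)
  have hcnt : Set.Countable {r : ℝ | 0 < P {ω | f (X' ω) = r}} :=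
    Measure.countable_meas_level_set_pos (hf.measurable.comp hX')
  have hexists : ∀ x y : ℝ, x < y →
      ∃ r, (x < r ∧ r < y) ∧ ¬ 0 < P {ω | f (X' ω) = r} := by
    intro x y hxy
    have hD0 : (volume : Measure ℝ) {r : ℝ | 0 < P {ω | f (X' ω) = r}} = 0 :=
      Set.Countable.measure_zero hcnt _
    have hne : (volume : Measure ℝ) (Set.Ioo x y \ {r : ℝ | 0 < P {ω | f (X' ω) = r}}) ≠ 0 := by
      rw [measure_diff_null hD0, Real.volume_Ioo]
      simp only [ne_eq, ENNReal.ofReal_eq_zero, not_le]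
      linarith
    obtain ⟨r, hr⟩ := nonempty_of_measure_ne_zero hne
    exact ⟨r, ⟨hr.1.1, hr.1.2⟩, hr.2⟩
  have hchoice : ∀ n : ℕ, ∀ i : Fin (n + 1),
      ∃ r, (a + (i : ℕ) * δ n < r ∧ r < a + ((i : ℕ) + 1) * δ n) ∧
        ¬ 0 < P {ω | f (X' ω) = r} := by
    intro n i
    apply hexists
    have hd := hδpos n
    nlinarith
  choose t ht using hchoice
  set A : (n : ℕ) → Fin (n + 1) → Set 𝒳 := fun n i => {y | t n i < f y} with hAdef
  have hAmeas : ∀ n (i : Fin (n + 1)), MeasurableSet (A n i) := fun n i =>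
    measurableSet_lt measurable_const hf.measurable
  have hAfr : ∀ n (i : Fin (n + 1)), P (X' ⁻¹' frontier (A n i)) = 0 := by
    intro n i
    have hsub : frontier (A n i) ⊆ {y | t n i = f y} := by
      simp only [hAdef]
      exact frontier_lt_subset_eq continuous_const hf
    refine measure_mono_null (fun ω hω => ?_)
      (le_antisymm (not_lt.1 (ht n i).2) (by positivity))
    exact (hsub hω).symm
  have hind_t : ∀ n (i : Fin (n + 1)), ∀ᵐ ω ∂P, Tendsto
      (fun m => (P[(fun ω' => Set.indicator (A n i) (fun _ => (1 : ℝ)) (X m ω')) | F m]) ω)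
      atTop (𝓝 (P (X' ⁻¹' A n i)).toReal) := fun n i => h3 (A n i) (hAmeas n i) (hAfr n i)
  set s : ℕ → 𝒳 → ℝ :=
    fun n x => a + δ n * ∑ i : Fin (n + 1), Set.indicator (A n i) (fun _ => (1 : ℝ)) x
    with hsdef
  have hsapprox : ∀ n x, |s n x - f x| ≤ δ n := by
    intro n x
    have hsum : (∑ i : Fin (n + 1), Set.indicator (A n i) (fun _ => (1 : ℝ)) x)
        = ((Finset.univ.filter (fun i : Fin (n + 1) => t n i < f x)).card : ℝ) := by
      simp only [hAdef, Set.indicator_apply, Set.mem_setOf_eq]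
      rw [Finset.sum_boole]
    simp only [hsdef]
    rw [hsum]
    apply aux_grid a (δ n) (hδpos n) (t n) (fun i => (ht n i).1.1) (fun i => (ht n i).1.2) (f x)
    · have := (abs_le.1 (hfC x)).1
      simp only [hadef]
      linarith
    · have h1 : ((n : ℝ) + 1) * δ n = 2 * C + 2 := by
        simp only [hδdef]
        field_simp
      have h2 := (abs_le.1 (hfC x)).2
      rw [h1]
      simp only [hadef]
      linarith
  have hsmeas : ∀ n, Measurable (s n) := by
    intro n
    simp only [hsdef]
    apply Measurable.add measurable_const
    apply Measurable.const_mul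
    exact Finset.measurable_sum _ (fun i _ => measurable_const.indicator (hAmeas n i))
  have hsbdd : ∀ n x, |s n x| ≤ C + δ n := by
    intro n x
    have h1 := hsapprox n x
    have h2 := hfC x
    have h3 : s n x = (s n x - f x) + f x := by ring
    rw [h3]
    exact (abs_add_le _ _).trans (by linarith)
  have hind_bdd : ∀ n (i : Fin (n + 1)) x,
      |Set.indicator (A n i) (fun _ => (1 : ℝ)) x| ≤ 1 := by
    intro n i x
    by_cases hx : x ∈ A n i <;> simp [Set.indicator_apply, hx]
  have int_f : ∀ m, Integrable (fun ω' => f (X m ω')) P :=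
    fun m => aux_integrable P f hf.measurable _ (hX m) C hfC
  have int_f' : Integrable (fun ω' => f (X' ω')) P :=
    aux_integrable P f hf.measurable _ hX' C hfC
  have int_s : ∀ n m, Integrable (fun ω' => s n (X m ω')) P :=
    fun n m => aux_integrable P _ (hsmeas n) _ (hX m) _ (hsbdd n)
  have int_s' : ∀ n, Integrable (fun ω' => s n (X' ω')) P :=
    fun n => aux_integrable P _ (hsmeas n) _ hX' _ (hsbdd n)
  have int_ind : ∀ n (i : Fin (n + 1)) m,
      Integrable (fun ω' => Set.indicator (A n i) (fun _ => (1 : ℝ)) (X m ω')) P :=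
    fun n i m => aux_integrable P _ (measurable_const.indicator (hAmeas n i)) _ (hX m) 1
      (hind_bdd n i)
  have int_ind' : ∀ n (i : Fin (n + 1)),
      Integrable (fun ω' => Set.indicator (A n i) (fun _ => (1 : ℝ)) (X' ω')) P :=
    fun n i => aux_integrable P _ (measurable_const.indicator (hAmeas n i)) _ hX' 1
      (hind_bdd n i)
  -- conditional expectation of the simple approximation
  have hcond : ∀ n m, (P[(fun ω' => s n (X m ω')) | F m]) =ᵐ[P]
      fun ω => a + δ n * ∑ i : Fin (n + 1),
        (P[(fun ω' => Set.indicator (A n i) (fun _ => (1 : ℝ)) (X m ω')) | F m]) ω := by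
    intro n m
    have heq : (fun ω' => s n (X m ω'))
        = (fun _ => a) + (δ n) • ∑ i : Fin (n + 1),
            (fun ω' => Set.indicator (A n i) (fun _ => (1 : ℝ)) (X m ω')) := by
      funext ω'
      simp only [hsdef, Pi.add_apply, Pi.smul_apply, Finset.sum_apply, smul_eq_mul]
    rw [heq]
    have i2 : Integrable (∑ i : Fin (n + 1),
        (fun ω' => Set.indicator (A n i) (fun _ => (1 : ℝ)) (X m ω'))) P := by
      have := integrable_finset_sum (μ := P) Finset.univ (fun i _ => int_ind n i m)
      refine this.congr (ae_of_all _ fun ω' => ?_)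
      simp [Finset.sum_apply]
    have step1 := condExp_add (μ := P) (m := F m) (integrable_const a) (i2.smul (δ n))
    have step3 := condExp_smul (μ := P) (m := F m) (δ n) (∑ i : Fin (n + 1),
      (fun ω' => Set.indicator (A n i) (fun _ => (1 : ℝ)) (X m ω')))
    have step4 := condExp_finset_sum (μ := P) (m := F m) (s := Finset.univ)
      (f := fun (i : Fin (n + 1)) ω' => Set.indicator (A n i) (fun _ => (1 : ℝ)) (X m ω'))
      (fun i _ => int_ind n i m)
    rw [condExp_const (hle m) a] at step1
    filter_upwards [step1, step3, step4] with ω e1 e3 e4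
    rw [e1]
    simp only [Pi.add_apply]
    rw [e3]
    simp only [Pi.smul_apply, smul_eq_mul]
    rw [e4]
    simp only [Finset.sum_apply]
  -- conditional expectations are close
  have hdiff : ∀ n m, ∀ᵐ ω ∂P,
      |(P[(fun ω' => f (X m ω')) | F m]) ω - (P[(fun ω' => s n (X m ω')) | F m]) ω| ≤ δ n := by
    intro n m
    have hsub := condExp_sub (μ := P) (m := F m) (int_f m) (int_s n m)
    have hbd : ∀ᵐ ω' ∂P,
        |((fun ω' => f (X m ω')) - fun ω' => s n (X m ω')) ω'| ≤ ((δ n).toNNReal : ℝ) :=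
      ae_of_all _ fun ω' => by
        rw [Pi.sub_apply, Real.coe_toNNReal _ (hδpos n).le, abs_sub_comm]
        exact hsapprox n (X m ω')
    have hbdd := ae_bdd_condExp_of_ae_bdd (m := F m) hbd
    filter_upwards [hsub, hbdd] with ω e1 e2
    rw [e1, Pi.sub_apply] at e2
    rwa [Real.coe_toNNReal _ (hδpos n).le] at e2
  -- integral of the simple approximation
  have hint : ∀ n, ∫ ω', s n (X' ω') ∂P
      = a + δ n * ∑ i : Fin (n + 1), (P (X' ⁻¹' A n i)).toReal := by
    intro n
    have heq : (fun ω' => s n (X' ω')) = fun ω' =>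
        a + δ n * ∑ i : Fin (n + 1), Set.indicator (A n i) (fun _ => (1 : ℝ)) (X' ω') := by
      funext ω'
      simp only [hsdef]
    rw [heq, integral_add (integrable_const a)
      (((integrable_finset_sum _ (fun i _ => int_ind' n i))).const_mul (δ n)),
      integral_const]
    simp only [measure_univ, probReal_univ, ENNReal.toReal_one, smul_eq_mul, one_mul]
    rw [integral_const_mul, integral_finset_sum _ (fun i _ => int_ind' n i)]
    congr 1
    congr 1
    exact Finset.sum_congr rfl fun i _ => aux_integral_indicator P _ (hAmeas n i) X' hX'
  have hint2 : ∀ n, |(a + δ n * ∑ i : Fin (n + 1), (P (X' ⁻¹' A n i)).toReal)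
      - ∫ ω', f (X' ω') ∂P| ≤ δ n := by
    intro n
    rw [← hint n, ← integral_sub (int_s' n) int_f']
    have hnorm := norm_integral_le_of_norm_le_const (μ := P)
      (f := fun ω' => s n (X' ω') - f (X' ω')) (C := δ n)
      (ae_of_all _ fun ω' => by rw [Real.norm_eq_abs]; exact hsapprox n (X' ω'))
    rw [probReal_univ, mul_one] at hnorm
    rwa [Real.norm_eq_abs] at hnorm
  have hδ0 : Tendsto δ atTop (𝓝 (0 : ℝ)) := by
    have h := tendsto_one_div_add_atTop_nhds_zero_nat.const_mul (2 * C + 2)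
    rw [mul_zero] at h
    refine h.congr fun n => ?_
    simp only [hδdef]
    rw [mul_one_div]
  -- assembly
  filter_upwards [ae_all_iff.2 (fun n => ae_all_iff.2 fun i => hind_t n i),
    ae_all_iff.2 (fun n => ae_all_iff.2 fun m => hdiff n m),
    ae_all_iff.2 (fun n => ae_all_iff.2 fun m => hcond n m)] with ω H1 H2 H3
  apply aux_sandwich
  intro ε hε
  obtain ⟨n, hn⟩ := (hδ0.eventually (eventually_le_nhds (by linarith : (0 : ℝ) < ε / 2))).exists
  have hvt : Tendsto (fun m => a + δ n * ∑ i : Fin (n + 1),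
      (P[(fun ω' => Set.indicator (A n i) (fun _ => (1 : ℝ)) (X m ω')) | F m]) ω) atTop
      (𝓝 (a + δ n * ∑ i : Fin (n + 1), (P (X' ⁻¹' A n i)).toReal)) :=
    tendsto_const_nhds.add ((tendsto_finset_sum _ (fun i _ => H1 n i)).const_mul (δ n))
  have huv : ∀ m, |(P[(fun ω' => f (X m ω')) | F m]) ω
      - (a + δ n * ∑ i : Fin (n + 1),
        (P[(fun ω' => Set.indicator (A n i) (fun _ => (1 : ℝ)) (X m ω')) | F m]) ω)| ≤ δ n := by
    intro m
    have h2 := H2 n m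
    rw [H3 n m] at h2
    exact h2
  have habs := abs_le.1 (hint2 n)
  constructor
  · refine ⟨fun m => (a + δ n * ∑ i : Fin (n + 1),
      (P[(fun ω' => Set.indicator (A n i) (fun _ => (1 : ℝ)) (X m ω')) | F m]) ω) + δ n,
      (a + δ n * ∑ i : Fin (n + 1), (P (X' ⁻¹' A n i)).toReal) + δ n,
      hvt.add tendsto_const_nhds, fun m => ?_, ?_⟩
    · have := abs_le.1 (huv m)
      beta_reduce
      linarith [this.2]
    · linarith [habs.2]
  · refine ⟨fun m => (a + δ n * ∑ i : Fin (n + 1),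
      (P[(fun ω' => Set.indicator (A n i) (fun _ => (1 : ℝ)) (X m ω')) | F m]) ω) - δ n,
      (a + δ n * ∑ i : Fin (n + 1), (P (X' ⁻¹' A n i)).toReal) - δ n,
      hvt.sub tendsto_const_nhds, fun m => ?_, ?_⟩
    · have := abs_le.1 (huv m)
      beta_reduce
      linarith [this.1]
    · linarith [habs.1]

/-- Conditional portmanteau lemma: conditional convergence in distribution is equivalent to
(2) a.s. convergence of conditional expectations of bounded Lipschitz functions, and to
(3) a.s. convergence of conditional probabilities of sets whose boundary is null for the limit. -/
theorem stmt_0 {Ω 𝒳 : Type*} [MeasurableSpace Ω] [MeasurableSpace 𝒳] [MetricSpace 𝒳]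
    [BorelSpace 𝒳]
    (P : Measure Ω) [IsProbabilityMeasure P]
    (F : ℕ → MeasurableSpace Ω) (hmono : Monotone F)
    (hle : ∀ m, F m ≤ (inferInstance : MeasurableSpace Ω))
    (X : ℕ → Ω → 𝒳) (X' : Ω → 𝒳)
    (hX : ∀ m, Measurable (X m)) (hX' : Measurable X') :
    (CondConvD P F X X' ↔
      (∀ f : 𝒳 → ℝ, (∃ K : NNReal, LipschitzWith K f) → (∃ C, ∀ x, |f x| ≤ C) →
        ∀ᵐ ω ∂P, Tendsto (fun m => (P[(fun ω' => f (X m ω')) | F m]) ω) atTop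
          (𝓝 (∫ ω', f (X' ω') ∂P))))
    ∧
    (CondConvD P F X X' ↔
      (∀ A : Set 𝒳, MeasurableSet A → P (X' ⁻¹' frontier A) = 0 →
        ∀ᵐ ω ∂P, Tendsto
          (fun m => (P[(fun ω' => Set.indicator A (fun _ => (1 : ℝ)) (X m ω')) | F m]) ω)
          atTop (𝓝 (P (X' ⁻¹' A)).toReal))) := by
  have h12 : CondConvD P F X X' →
      (∀ f : 𝒳 → ℝ, (∃ K : NNReal, LipschitzWith K f) → (∃ C, ∀ x, |f x| ≤ C) →
        ∀ᵐ ω ∂P, Tendsto (fun m => (P[(fun ω' => f (X m ω')) | F m]) ω) atTop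
          (𝓝 (∫ ω', f (X' ω') ∂P))) := by
    intro h1 f hK hb
    obtain ⟨K, hKf⟩ := hK
    exact h1 f hKf.continuous hb
  have h23 := fun h2 => aux_two_to_three P F hle X X' hX hX' h2
  have h31 := fun h3 => aux_three_to_one P F hle X X' hX hX' h3
  constructor
  · constructor
    · exact h12
    · intro h2 f hf hb
      exact h31 (fun A hA hfr => h23 h2 A hA hfr) f hf hb
  · constructor
    · intro h1 A hA hfr
      exact h23 (h12 h1) A hA hfr
    · intro h3 f hf hb
      exact h31 h3 f hf hb
end

section
/- Conditional Slutsky theorem with random matrices: Suppose 𝒳 = ℝ^d, X_m | F_m converges in distribution to X as m → ∞, and A, A_1, A_2, … are ℝ^{d×d}-valued random matrices such that each A_m is F_m-measurable, A is a constant matrix, and A_m → A almost surely as m → ∞. Then A_m X_m | F_m converges in distribution to A X. -/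
open MeasureTheory Filter Topology

namespace Stmt8Aux

/-- entrywise matrix-vector product on pi types -/
def mulPi {d : ℕ} (B : Fin d → Fin d → ℝ) (x : Fin d → ℝ) : Fin d → ℝ :=
  fun i => ∑ j, B i j * x j

lemma mulVec_eq_mulPi {d : ℕ} (B : Matrix (Fin d) (Fin d) ℝ) (x : Fin d → ℝ) :
    B.mulVec x = mulPi (fun i j => B i j) x := by
  funext i
  simp [Matrix.mulVec, dotProduct, mulPi]

lemma exists_delta {d : ℕ} (f : (Fin d → ℝ) → ℝ) (hf : Continuous f)
    (A' : Fin d → Fin d → ℝ) (R : ℝ) {η : ℝ} (hη : 0 < η) :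
    ∃ δ > 0, ∀ (B : Fin d → Fin d → ℝ) (x : Fin d → ℝ), dist B A' ≤ δ → ‖x‖ ≤ R →
      |f (mulPi B x) - f (mulPi A' x)| ≤ η := by
  have hG : Continuous (fun p : (Fin d → Fin d → ℝ) × (Fin d → ℝ) => f (mulPi p.1 p.2)) := by
    apply hf.comp
    apply continuous_pi
    intro i
    apply continuous_finset_sum
    intro j _
    exact ((continuous_apply j).comp ((continuous_apply i).comp continuous_fst)).mul
      ((continuous_apply j).comp continuous_snd)
  have hs : IsCompact ((Metric.closedBall A' 1) ×ˢ (Metric.closedBall (0 : Fin d → ℝ) R)) :=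
    (isCompact_closedBall _ _).prod (isCompact_closedBall _ _)
  have huc := hs.uniformContinuousOn_of_continuous hG.continuousOn
  rw [Metric.uniformContinuousOn_iff] at huc
  obtain ⟨δ₀, hδ₀, hδ⟩ := huc η hη
  refine ⟨min (δ₀ / 2) 1, lt_min (by linarith) one_pos, fun B x hB hx => ?_⟩
  have hB1 : B ∈ Metric.closedBall A' 1 := by
    rw [Metric.mem_closedBall]
    exact hB.trans (min_le_right _ _)
  have hA1 : A' ∈ Metric.closedBall A' 1 := Metric.mem_closedBall_self one_pos.le
  have hx1 : x ∈ Metric.closedBall (0 : Fin d → ℝ) R := by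
    rw [Metric.mem_closedBall, dist_zero_right]; exact hx
  have hd : dist ((B, x) : (Fin d → Fin d → ℝ) × (Fin d → ℝ)) (A', x) < δ₀ := by
    rw [Prod.dist_eq]
    simp only [dist_self]
    have h1 : dist B A' < δ₀ := lt_of_le_of_lt (hB.trans (min_le_left _ _)) (by linarith)
    exact max_lt h1 hδ₀
  have := hδ (B, x) (Set.mk_mem_prod hB1 hx1) (A', x) (Set.mk_mem_prod hA1 hx1) hd
  rw [Real.dist_eq] at this
  exact this.le

/-- cutoff function -/
noncomputable def cut {d : ℕ} (R : ℝ) (x : Fin d → ℝ) : ℝ := min 1 (max (‖x‖ - R) 0)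

lemma cut_nonneg {d : ℕ} (R : ℝ) (x : Fin d → ℝ) : 0 ≤ cut R x :=
  le_min one_pos.le (le_max_right _ _)

lemma cut_le_one {d : ℕ} (R : ℝ) (x : Fin d → ℝ) : cut R x ≤ 1 := min_le_left _ _

lemma abs_cut_le_one {d : ℕ} (R : ℝ) (x : Fin d → ℝ) : |cut R x| ≤ 1 := by
  rw [abs_of_nonneg (cut_nonneg _ _)]; exact cut_le_one _ _

lemma cut_eq_one {d : ℕ} {R : ℝ} {x : Fin d → ℝ} (h : R + 1 < ‖x‖) : cut R x = 1 := by
  have h1 : (1:ℝ) ≤ ‖x‖ - R := by linarith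
  simp [cut, max_eq_left (le_trans one_pos.le h1), min_eq_left h1]

lemma continuous_cut {d : ℕ} (R : ℝ) : Continuous (cut (d := d) R) := by
  unfold cut
  fun_prop

lemma integrable_of_bdd {Ω : Type*} [MeasurableSpace Ω] {P : Measure Ω} [IsProbabilityMeasure P]
    {g : Ω → ℝ} (hg : AEStronglyMeasurable g P) {C : ℝ} (h : ∀ ω, |g ω| ≤ C) :
    Integrable g P :=
  (integrable_const C).mono' hg (ae_of_all _ fun ω => by simpa [Real.norm_eq_abs] using h ω)

lemma measurable_pi_lambda' {α : Type*} (m : MeasurableSpace α) {δ : Type*} {π : δ → Type*}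
    [∀ a, MeasurableSpace (π a)] (f : α → ∀ a, π a)
    (hf : ∀ a, Measurable[m] fun c => f c a) : Measurable[m] f :=
  measurable_pi_lambda f hf

lemma key_ineq {Ω : Type*} (Fm : MeasurableSpace Ω) {inst : MeasurableSpace Ω}
    (P : Measure Ω) [IsProbabilityMeasure P] (hle : Fm ≤ inst)
    {d : ℕ} (f : (Fin d → ℝ) → ℝ) (hf : Continuous f)
    {C : ℝ} (hC : ∀ x, |f x| ≤ C) (hC0 : 0 ≤ C)
    (Y : Ω → Fin d → ℝ) (hY : Measurable[inst] Y)
    (B : Ω → Fin d → Fin d → ℝ) (hB : Measurable[Fm] B)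
    (A' : Fin d → Fin d → ℝ) (R : ℝ) {ε δ : ℝ} (hε : 0 ≤ ε)
    (hδ : ∀ (B₀ : Fin d → Fin d → ℝ) (x : Fin d → ℝ), dist B₀ A' ≤ δ → ‖x‖ ≤ R + 1 →
      |f (mulPi B₀ x) - f (mulPi A' x)| ≤ ε) :
    ∀ᵐ ω ∂P,
      |(P[(fun ω' => f (mulPi (B ω') (Y ω'))) | Fm]) ω
        - (P[(fun ω' => f (mulPi A' (Y ω'))) | Fm]) ω|
      ≤ ε + 2*C*({ω' | δ < dist (B ω') A'}.indicator (fun _ => (1:ℝ)) ω)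
        + 2*C*((P[(fun ω' => cut R (Y ω')) | Fm]) ω) := by
  set g1 : Ω → ℝ := fun ω' => f (mulPi (B ω') (Y ω')) with hg1def
  set g2 : Ω → ℝ := fun ω' => f (mulPi A' (Y ω')) with hg2def
  set g3 : Ω → ℝ := fun ω' => cut R (Y ω') with hg3def
  set S : Set Ω := {ω' | δ < dist (B ω') A'} with hSdef
  set ind : Ω → ℝ := S.indicator (fun _ => (1:ℝ)) with hinddef
  set Bd : Ω → ℝ := (fun _ => ε) + ((2*C) • ind) + ((2*C) • g3) with hBddef
  -- measurability facts
  have hmg1 : Measurable[inst] g1 := by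
    apply hf.measurable.comp
    apply measurable_pi_lambda
    intro i
    apply Finset.measurable_sum
    intro j _
    exact ((((measurable_pi_apply j).comp ((measurable_pi_apply i).comp hB)).mono (hle) le_rfl).mul
      ((measurable_pi_apply j).comp hY))
  have hmg2 : Measurable[inst] g2 := by
    apply hf.measurable.comp
    apply measurable_pi_lambda
    intro i
    exact Finset.measurable_sum _ fun j _ => (measurable_const.mul ((measurable_pi_apply j).comp hY))
  have hmg3 : Measurable[inst] g3 := (continuous_cut R).measurable.comp hY
  have hdistm : Measurable[Fm] (fun ω' => dist (B ω') A') :=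
    ((continuous_id.dist continuous_const).measurable :
      Measurable fun p : Fin d → Fin d → ℝ => dist p A').comp hB
  have hSm : MeasurableSet[Fm] S := measurableSet_lt (@measurable_const ℝ Ω _ Fm δ) hdistm
  have hind_sm : StronglyMeasurable[Fm] ind := stronglyMeasurable_const.indicator hSm
  have hind_abs : ∀ ω', |ind ω'| ≤ (1:ℝ) := by
    intro ω'
    by_cases h : ω' ∈ S
    · simp [hinddef, Set.indicator_of_mem h]
    · simp [hinddef, Set.indicator_of_notMem h]
  have hind_nonneg : ∀ ω', 0 ≤ ind ω' := fun ω' => Set.indicator_nonneg (fun _ _ => zero_le_one) _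
  -- integrability facts
  have hig1 : Integrable g1 P := integrable_of_bdd hmg1.aestronglyMeasurable (fun ω' => hC _)
  have hig2 : Integrable g2 P := integrable_of_bdd hmg2.aestronglyMeasurable (fun ω' => hC _)
  have hig3 : Integrable g3 P := integrable_of_bdd hmg3.aestronglyMeasurable
    (fun ω' => abs_cut_le_one _ _)
  have hiind : Integrable ind P :=
    integrable_of_bdd (hind_sm.mono hle).aestronglyMeasurable hind_abs
  have hiBd : Integrable Bd P :=
    ((integrable_const ε).add (hiind.smul (2*C))).add (hig3.smul (2*C))
  -- pointwise bound
  have habs : ∀ ω', |g1 ω' - g2 ω'| ≤ Bd ω' := by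
    intro ω'
    have h1 := abs_le.1 (hC (mulPi (B ω') (Y ω')))
    have h2 := abs_le.1 (hC (mulPi A' (Y ω')))
    have hBdval : Bd ω' = ε + 2*C*ind ω' + 2*C*g3 ω' := by
      simp [hBddef, smul_eq_mul]
    have hg30 : 0 ≤ g3 ω' := cut_nonneg _ _
    have hg31 : g3 ω' ≤ 1 := cut_le_one _ _
    by_cases hd : dist (B ω') A' ≤ δ
    · by_cases hx : ‖Y ω'‖ ≤ R + 1
      · have := hδ (B ω') (Y ω') hd hx
        rw [hBdval]
        refine le_trans this ?_
        nlinarith [hind_nonneg ω']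
      · have h3 : g3 ω' = 1 := cut_eq_one (lt_of_not_ge hx)
        rw [hBdval, abs_le]
        constructor <;> nlinarith [hind_nonneg ω']
    · have hmem : ω' ∈ S := not_le.1 hd
      have hind1 : ind ω' = 1 := by simp [hinddef, Set.indicator_of_mem hmem]
      rw [hBdval, abs_le]
      constructor <;> nlinarith
  -- conditional expectation manipulations
  have hsub1 : P[g1 - g2 | Fm] =ᵐ[P] P[g1|Fm] - P[g2|Fm] := condExp_sub hig1 hig2 Fm
  have hsub2 : P[g2 - g1 | Fm] =ᵐ[P] P[g2|Fm] - P[g1|Fm] := condExp_sub hig2 hig1 Fm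
  have hmono1 : P[g1 - g2 | Fm] ≤ᵐ[P] P[Bd|Fm] :=
    condExp_mono (hig1.sub hig2) hiBd (ae_of_all _ fun ω' => by
      have := (abs_le.1 (habs ω')).2
      simpa [Pi.sub_apply] using this)
  have hmono2 : P[g2 - g1 | Fm] ≤ᵐ[P] P[Bd|Fm] :=
    condExp_mono (hig2.sub hig1) hiBd (ae_of_all _ fun ω' => by
      have := (abs_le.1 (habs ω')).1
      simp only [Pi.sub_apply]
      linarith)
  have hBdeq : P[Bd|Fm] =ᵐ[P] (fun ω => ε + 2*C*ind ω + 2*C*((P[g3|Fm]) ω)) := by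
    have e1 : P[Bd|Fm] =ᵐ[P] P[(fun _ => ε) + ((2*C) • ind)|Fm] + P[(2*C) • g3|Fm] :=
      condExp_add ((integrable_const ε).add (hiind.smul (2*C))) (hig3.smul (2*C)) Fm
    have e2 : P[(fun _ => ε) + ((2*C) • ind)|Fm] =ᵐ[P] P[(fun _ => ε)|Fm] + P[(2*C) • ind|Fm] :=
      condExp_add (integrable_const ε) (hiind.smul (2*C)) Fm
    have e3 : P[(fun (_ : Ω) => ε)|Fm] = fun _ => ε := condExp_const hle ε
    have e4 : P[(2*C) • ind|Fm] = (2*C) • ind :=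
      condExp_of_stronglyMeasurable hle (hind_sm.const_smul (2*C)) (hiind.smul (2*C))
    have e5 : P[(2*C) • g3|Fm] =ᵐ[P] (2*C) • P[g3|Fm] := condExp_smul (2*C) g3 Fm
    calc P[Bd|Fm] =ᵐ[P] P[(fun _ => ε) + ((2*C) • ind)|Fm] + P[(2*C) • g3|Fm] := e1
      _ =ᵐ[P] (P[(fun _ => ε)|Fm] + P[(2*C) • ind|Fm]) + ((2*C) • P[g3|Fm]) := e2.add e5
      _ =ᵐ[P] (fun ω => ε + 2*C*ind ω + 2*C*((P[g3|Fm]) ω)) := by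
          rw [e3, e4]
          exact ae_of_all _ fun ω => by simp [smul_eq_mul]
  filter_upwards [hsub1, hsub2, hmono1, hmono2, hBdeq] with ω h1 h2 h3 h4 h5
  rw [h5] at h3 h4
  rw [abs_le]
  constructor
  · have := h4
    rw [h2] at this
    simp only [Pi.sub_apply] at this
    linarith
  · have := h3
    rw [h1] at this
    simp only [Pi.sub_apply] at this
    linarith

end Stmt8Aux

open Stmt8Aux

/-- Conditional Slutsky theorem with random matrices: if `𝒳 = ℝ^d`, `X_m | F_m` converges
in distribution to `X`, and `A, A_1, A_2, …` are `ℝ^{d×d}`-valued random matrices such that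
each `A_m` is `F_m`-measurable, `A` is a constant matrix, and `A_m → A` almost surely, then
`A_m X_m | F_m` converges in distribution to `A X`. -/
theorem stmt_8 {Ω : Type*} [MeasurableSpace Ω]
    (P : Measure Ω) [IsProbabilityMeasure P]
    (F : ℕ → MeasurableSpace Ω) (hmono : Monotone F)
    (hle : ∀ m, F m ≤ (inferInstance : MeasurableSpace Ω))
    {d : ℕ}
    (X : ℕ → Ω → (Fin d → ℝ)) (X' : Ω → (Fin d → ℝ))
    (hX : ∀ m, Measurable (X m)) (hX' : Measurable X')
    (A : Matrix (Fin d) (Fin d) ℝ) (Am : ℕ → Ω → Matrix (Fin d) (Fin d) ℝ)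
    (hAmeas : ∀ m i j, Measurable[F m] (fun ω => Am m ω i j))
    (hAconv : ∀ᵐ ω ∂P, ∀ i j, Tendsto (fun m => Am m ω i j) atTop (𝓝 (A i j)))
    (hconv : CondConvD P F X X') :
    CondConvD P F (fun m ω => (Am m ω).mulVec (X m ω)) (fun ω => A.mulVec (X' ω)) := by
  intro f hf hfb
  obtain ⟨C, hC⟩ := hfb
  have hC0 : 0 ≤ C := (abs_nonneg _).trans (hC 0)
  simp only [mulVec_eq_mulPi]
  set A' : Fin d → Fin d → ℝ := fun i j => A i j with hA'def
  set L : ℝ := ∫ ω', f (mulPi A' (X' ω')) ∂P with hLdef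
  -- continuity of x ↦ f (mulPi B x) for fixed B
  have hcontB : ∀ B : Fin d → Fin d → ℝ, Continuous (fun x => f (mulPi B x)) := by
    intro B
    apply hf.comp
    apply continuous_pi
    intro i
    exact continuous_finset_sum _ fun j _ => (continuous_const.mul (continuous_apply j))
  -- convergence of the "frozen matrix" conditional expectations
  have hb : ∀ᵐ ω ∂P, Tendsto (fun m => (P[(fun ω' => f (mulPi A' (X m ω'))) | F m]) ω)
      atTop (𝓝 L) := hconv (fun x => f (mulPi A' x)) (hcontB A') ⟨C, fun x => hC _⟩
  -- integral of the cutoff tends to 0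
  have hcut_int : Tendsto (fun n : ℕ => ∫ ω', cut (n : ℝ) (X' ω') ∂P) atTop (𝓝 0) := by
    have h0 : (0:ℝ) = ∫ _ω', (0:ℝ) ∂P := by simp
    rw [h0]
    apply tendsto_integral_of_dominated_convergence (fun _ => (1:ℝ))
    · exact fun n => ((continuous_cut (n:ℝ)).measurable.comp hX').aestronglyMeasurable
    · exact integrable_const 1
    · intro n
      exact ae_of_all _ fun ω => by
        simpa [Real.norm_eq_abs] using abs_cut_le_one (n:ℝ) (X' ω)
    · refine ae_of_all _ fun ω => ?_
      have hev : ∀ᶠ n : ℕ in atTop, cut (n : ℝ) (X' ω) = 0 := by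
        filter_upwards [eventually_ge_atTop ⌈‖X' ω‖⌉₊] with n hn
        have hle' : ‖X' ω‖ ≤ (n : ℝ) := le_trans (Nat.le_ceil _) (Nat.cast_le.2 hn)
        simp [cut, max_eq_right (sub_nonpos.2 hle'), min_eq_right (zero_le_one)]
      exact Tendsto.congr' (hev.mono fun n h => h.symm) tendsto_const_nhds
  -- for each k, pick a radius and a delta
  have hstep : ∀ k : ℕ, ∀ᵐ ω ∂P, ∀ᶠ m in atTop,
      |(P[(fun ω' => f (mulPi (fun i j => Am m ω' i j) (X m ω'))) | F m]) ω - L|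
        ≤ (2 + 4*C) * (1 / (k+1)) := by
    intro k
    set ε : ℝ := 1 / ((k:ℝ)+1) with hεdef
    have hε : 0 < ε := by positivity
    obtain ⟨R, hR⟩ := (hcut_int.eventually_lt_const hε).exists
    obtain ⟨δ, hδpos, hδ⟩ := exists_delta f hf A' ((R:ℝ)+1) hε
    have hc : ∀ᵐ ω ∂P, Tendsto (fun m => (P[(fun ω' => cut (R:ℝ) (X m ω')) | F m]) ω)
        atTop (𝓝 (∫ ω', cut (R:ℝ) (X' ω') ∂P)) :=
      hconv (cut (R:ℝ)) (continuous_cut _) ⟨1, fun x => abs_cut_le_one _ x⟩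
    have hkey : ∀ m : ℕ, ∀ᵐ ω ∂P,
        |(P[(fun ω' => f (mulPi (fun i j => Am m ω' i j) (X m ω'))) | F m]) ω
          - (P[(fun ω' => f (mulPi A' (X m ω'))) | F m]) ω|
        ≤ ε + 2*C*({ω' | δ < dist (fun i j => Am m ω' i j) A'}.indicator (fun _ => (1:ℝ)) ω)
          + 2*C*((P[(fun ω' => cut (R:ℝ) (X m ω')) | F m]) ω) := by
      intro m
      exact key_ineq (F m) P (hle m) f hf hC hC0 (X m) (hX m)
        (fun ω' i j => Am m ω' i j)
        (measurable_pi_lambda' (F m) _ fun i => measurable_pi_lambda' (F m) _ fun j => hAmeas m i j)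
        A' ((R:ℝ)) hε.le (fun B₀ x h1 h2 => hδ B₀ x h1 h2)
    have hAconv' : ∀ᵐ ω ∂P,
        Tendsto (fun m => dist (fun i j => Am m ω i j) A') atTop (𝓝 0) := by
      filter_upwards [hAconv] with ω hω
      have ht : Tendsto (fun m => (fun i j => Am m ω i j)) atTop (𝓝 A') :=
        tendsto_pi_nhds.2 fun i => tendsto_pi_nhds.2 fun j => hω i j
      simpa using ht.dist (tendsto_const_nhds (x := A'))
    filter_upwards [hb, hc, hAconv', ae_all_iff.2 hkey] with ω hbω hcω hAω hkeyω
    have e1 : ∀ᶠ m in atTop,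
        |(P[(fun ω' => f (mulPi A' (X m ω'))) | F m]) ω - L| < ε := by
      have := hbω (Metric.ball_mem_nhds L hε)
      filter_upwards [this] with m hm
      rw [← Real.dist_eq]
      exact Metric.mem_ball.1 hm
    have e2 : ∀ᶠ m in atTop, (P[(fun ω' => cut (R:ℝ) (X m ω')) | F m]) ω < ε :=
      hcω.eventually_lt_const hR
    have e3 : ∀ᶠ m in atTop, dist (fun i j => Am m ω i j) A' ≤ δ := by
      filter_upwards [hAω.eventually_lt_const hδpos] with m hm
      exact hm.le
    filter_upwards [e1, e2, e3] with m h1 h2 h3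
    have hind0 : ({ω' | δ < dist (fun i j => Am m ω' i j) A'}.indicator
        (fun _ => (1:ℝ)) ω) = 0 := by
      apply Set.indicator_of_notMem
      simp only [Set.mem_setOf_eq, not_lt]
      exact h3
    have hkm := hkeyω m
    rw [hind0] at hkm
    have htri := abs_sub_le ((P[(fun ω' => f (mulPi (fun i j => Am m ω' i j) (X m ω'))) | F m]) ω)
      ((P[(fun ω' => f (mulPi A' (X m ω'))) | F m]) ω) L
    have hmul : 2*C*((P[(fun ω' => cut (R:ℝ) (X m ω')) | F m]) ω) ≤ 2*C*ε :=
      mul_le_mul_of_nonneg_left h2.le (by positivity)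
    have hgoal : (2 + 4*C) * (1 / ((k:ℝ)+1)) = (2 + 4*C) * ε := by rw [hεdef]
    rw [hgoal]
    nlinarith [hε.le]
  have hae : ∀ᵐ ω ∂P, ∀ k : ℕ, ∀ᶠ m in atTop,
      |(P[(fun ω' => f (mulPi (fun i j => Am m ω' i j) (X m ω'))) | F m]) ω - L|
        ≤ (2 + 4*C) * (1 / (k+1)) := ae_all_iff.2 hstep
  filter_upwards [hae] with ω hω
  rw [Metric.tendsto_atTop]
  intro ε' hε'
  obtain ⟨k, hk⟩ := exists_nat_gt ((2 + 4*C) / ε')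
  have hklt : (2 + 4*C) * (1 / ((k:ℝ)+1)) < ε' := by
    rw [mul_one_div, div_lt_iff₀ (by positivity)]
    rw [div_lt_iff₀ hε'] at hk
    nlinarith [hε'.le]
  obtain ⟨N, hN⟩ := (hω k).exists_forall_of_atTop
  exact ⟨N, fun n hn => by
    rw [Real.dist_eq]
    exact lt_of_le_of_lt (hN n hn) hklt⟩
end

section
/- Stochastic monotonicity along the tempered path: For every y ∈ ℝ, the map β ↦ π_β({x ∈ 𝒳 : ℓ(x) > y}) is nondecreasing on [0,1]. Equivalently, if L_β = ℓ(X_β) with X_β ∼ π_β, then L_β is stochastically nondecreasing in β. -/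
open MeasureTheory Filter Topology ENNReal

/-- Stochastic monotonicity along the tempered path: with `π_β` the probability measure
with density `exp(β ℓ) / Z(β)` with respect to `μ`, for every `y ∈ ℝ` the map
`β ↦ π_β({x : ℓ(x) > y})` is nondecreasing on `[0,1]`.  (The probability
`π_β({ℓ > y})` is written as the ratio `(∫⁻_{ℓ > y} e^{βℓ} dμ) / (∫⁻ e^{βℓ} dμ)`.) -/
theorem stmt_10 {𝒳 : Type*} [MeasurableSpace 𝒳]
    (μ : Measure 𝒳) [IsProbabilityMeasure μ]
    (ℓ : 𝒳 → ℝ) (hℓ : Measurable ℓ)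
    (hZpos : ∀ β ∈ Set.Icc (0 : ℝ) 1,
      0 < ∫⁻ x, ENNReal.ofReal (Real.exp (β * ℓ x)) ∂μ)
    (hZfin : ∀ β ∈ Set.Icc (0 : ℝ) 1,
      (∫⁻ x, ENNReal.ofReal (Real.exp (β * ℓ x)) ∂μ) < ⊤)
    (y : ℝ) :
    MonotoneOn
      (fun β =>
        (∫⁻ x in {x | y < ℓ x}, ENNReal.ofReal (Real.exp (β * ℓ x)) ∂μ) /
          ∫⁻ x, ENNReal.ofReal (Real.exp (β * ℓ x)) ∂μ)
      (Set.Icc (0 : ℝ) 1) := by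
  intro a ha b hb hab
  set S : Set 𝒳 := {x | y < ℓ x} with hS
  have hSm : MeasurableSet S := measurableSet_lt measurable_const hℓ
  set A : ℝ → ℝ≥0∞ := fun β => ∫⁻ x in S, ENNReal.ofReal (Real.exp (β * ℓ x)) ∂μ with hA
  set B : ℝ → ℝ≥0∞ := fun β => ∫⁻ x in Sᶜ, ENNReal.ofReal (Real.exp (β * ℓ x)) ∂μ with hB
  have hZ : ∀ β, (∫⁻ x, ENNReal.ofReal (Real.exp (β * ℓ x)) ∂μ) = A β + B β := by
    intro β
    rw [hA, hB]
    exact (lintegral_add_compl _ hSm).symm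
  -- key: A a * B b ≤ A b * B a
  have key : A a * B b ≤ A b * B a := by
    have step : ∀ x ∈ S, ENNReal.ofReal (Real.exp (a * ℓ x)) * B b
        ≤ ENNReal.ofReal (Real.exp (b * ℓ x)) * B a := by
      intro x hx
      rw [hB, ← lintegral_const_mul _ ((hℓ.const_mul b).exp.ennreal_ofReal),
        ← lintegral_const_mul _ ((hℓ.const_mul a).exp.ennreal_ofReal)]
      refine setLIntegral_mono (((hℓ.const_mul a).exp.ennreal_ofReal).const_mul _) ?_
      intro x' hx'
      rw [← ENNReal.ofReal_mul (Real.exp_nonneg _), ← ENNReal.ofReal_mul (Real.exp_nonneg _),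
        ← Real.exp_add, ← Real.exp_add]
      refine ENNReal.ofReal_le_ofReal (Real.exp_le_exp.mpr ?_)
      have h1 : ℓ x' ≤ y := not_lt.mp hx'
      have h2 : y < ℓ x := hx
      nlinarith
    calc A a * B b = ∫⁻ x in S, ENNReal.ofReal (Real.exp (a * ℓ x)) * B b ∂μ := by
          rw [lintegral_mul_const _ ((hℓ.const_mul a).exp.ennreal_ofReal)]
      _ ≤ ∫⁻ x in S, ENNReal.ofReal (Real.exp (b * ℓ x)) * B a ∂μ :=
          setLIntegral_mono (((hℓ.const_mul b).exp.ennreal_ofReal).mul_const _) step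
      _ = A b * B a := lintegral_mul_const _ ((hℓ.const_mul b).exp.ennreal_ofReal)
  -- conclude
  simp only
  rw [hZ a, hZ b]
  show A a / (A a + B a) ≤ A b / (A b + B b)
  have hZa0 : A a + B a ≠ 0 := by rw [← hZ a]; exact (hZpos a ha).ne'
  have hZat : A a + B a ≠ ⊤ := by rw [← hZ a]; exact (hZfin a ha).ne
  have hZb0 : A b + B b ≠ 0 := by rw [← hZ b]; exact (hZpos b hb).ne'
  have hZbt : A b + B b ≠ ⊤ := by rw [← hZ b]; exact (hZfin b hb).ne
  rw [ENNReal.le_div_iff_mul_le (Or.inl hZb0) (Or.inl hZbt), ← ENNReal.mul_div_right_comm, ENNReal.div_le_iff hZa0 hZat]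
  calc A a * (A b + B b) = A a * A b + A a * B b := mul_add _ _ _
    _ ≤ A a * A b + A b * B a := add_le_add le_rfl key
    _ = A b * (A a + B a) := by ring
end

section
/- Monotonicity of swap rejection rates under interval inclusion: If 0 ≤ a' ≤ a ≤ b ≤ b' ≤ 1, then r(a, b) ≤ r(a', b'). -/
open MeasureTheory Filter Topology ENNReal

/-- The tempered distribution `π_β`, with density `exp(β ℓ) / Z(β)` with respect to `μ`. -/
noncomputable def tempered {𝒳 : Type*} [MeasurableSpace 𝒳] (μ : Measure 𝒳) (ℓ : 𝒳 → ℝ)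
    (β : ℝ) : Measure 𝒳 :=
  μ.withDensity fun x =>
    ENNReal.ofReal (Real.exp (β * ℓ x)) / ∫⁻ x', ENNReal.ofReal (Real.exp (β * ℓ x')) ∂μ

/-- The mean rejection rate of a swap between `π_a` and `π_b` (for `a ≤ b`):
`r(a, b) = 1 − E[1 ∧ exp(−(b − a)(ℓ(X_b) − ℓ(X_a)))]` with `X_a ∼ π_a`, `X_b ∼ π_b`
independent. -/
noncomputable def rejRate {𝒳 : Type*} [MeasurableSpace 𝒳] (μ : Measure 𝒳) (ℓ : 𝒳 → ℝ)
    (a b : ℝ) : ℝ :=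
  1 - ∫ x, (∫ x', min 1 (Real.exp (-(b - a) * (ℓ x' - ℓ x))) ∂tempered μ ℓ b)
        ∂tempered μ ℓ a

namespace Stmt11Aux

set_option linter.unusedSectionVars false
set_option linter.unusedVariables false

/-! ### The sign function -/

noncomputable def sgn (t : ℝ) : ℝ := if t < 0 then -1 else if 0 < t then 1 else 0

lemma sgn_measurable : Measurable sgn := by
  unfold sgn
  exact Measurable.ite (measurableSet_lt measurable_id measurable_const) measurable_const
    (Measurable.ite (measurableSet_lt measurable_const measurable_id) measurable_const
      measurable_const)

lemma sgn_abs_le (t : ℝ) : |sgn t| ≤ 1 := by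
  unfold sgn; split_ifs <;> simp

lemma sgn_mono : Monotone sgn := by
  intro s t h
  unfold sgn
  split_ifs <;> norm_num <;> linarith

lemma sgn_neg (t : ℝ) : sgn (-t) = - sgn t := by
  unfold sgn
  split_ifs <;> linarith

lemma key_real {a b Za Zb s t : ℝ} (hab : a ≤ b) :
    Real.exp (a * s) / Za * (Real.exp (b * t) / Zb * min 1 (Real.exp (-(b - a) * (t - s))))
      = (Real.exp (a * s) / Za * (Real.exp (b * t) / Zb)
          + Real.exp (b * s) / Zb * (Real.exp (a * t) / Za)
         - (Real.exp (a * s) / Za * (Real.exp (b * t) / Zb)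
            - Real.exp (b * s) / Zb * (Real.exp (a * t) / Za)) * sgn (t - s)) / 2 := by
  rcases lt_trichotomy s t with h | h | h
  · have hs : sgn (t - s) = 1 := by
      unfold sgn; rw [if_neg (by linarith), if_pos (by linarith)]
    have hmin : min 1 (Real.exp (-(b - a) * (t - s))) = Real.exp (-(b - a) * (t - s)) :=
      min_eq_right (Real.exp_le_one_iff.2 (by nlinarith))
    have he : Real.exp (a * s) * (Real.exp (b * t) * Real.exp (-(b - a) * (t - s)))
        = Real.exp (b * s) * Real.exp (a * t) := by
      rw [← Real.exp_add, ← Real.exp_add, ← Real.exp_add]; ring_nf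
    rw [hs, hmin]
    calc Real.exp (a * s) / Za * (Real.exp (b * t) / Zb * Real.exp (-(b - a) * (t - s)))
        = Real.exp (a * s) * (Real.exp (b * t) * Real.exp (-(b - a) * (t - s))) / (Za * Zb) := by
          ring
      _ = Real.exp (b * s) * Real.exp (a * t) / (Za * Zb) := by rw [he]
      _ = _ := by ring
  · subst h
    have hs : sgn (s - s) = 0 := by unfold sgn; simp
    rw [hs]
    simp
    ring
  · have hs : sgn (t - s) = -1 := by unfold sgn; rw [if_pos (by linarith)]
    have hmin : min 1 (Real.exp (-(b - a) * (t - s))) = 1 :=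
      min_eq_left (Real.one_le_exp_iff.2 (by nlinarith))
    rw [hs, hmin]; ring

/-! ### The normalized densities -/

variable {𝒳 : Type*} [MeasurableSpace 𝒳]

/-- normalized density of `tempered` with respect to `μ` -/
noncomputable def q (μ : Measure 𝒳) (ℓ : 𝒳 → ℝ) (β : ℝ) (x : 𝒳) : ℝ :=
  Real.exp (β * ℓ x) / (∫⁻ x', ENNReal.ofReal (Real.exp (β * ℓ x')) ∂μ).toReal

variable {μ : Measure 𝒳} {ℓ : 𝒳 → ℝ} {β : ℝ}

lemma Zr_pos (hp : 0 < ∫⁻ x, ENNReal.ofReal (Real.exp (β * ℓ x)) ∂μ)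
    (hf : (∫⁻ x, ENNReal.ofReal (Real.exp (β * ℓ x)) ∂μ) < ⊤) :
    0 < (∫⁻ x, ENNReal.ofReal (Real.exp (β * ℓ x)) ∂μ).toReal :=
  ENNReal.toReal_pos hp.ne' hf.ne

lemma q_meas (hℓ : Measurable ℓ) : Measurable (q μ ℓ β) :=
  ((hℓ.const_mul β).exp).div_const _

lemma q_nonneg (x : 𝒳) : 0 ≤ q μ ℓ β x :=
  div_nonneg (Real.exp_pos _).le ENNReal.toReal_nonneg

lemma exp_integrable (hℓ : Measurable ℓ)
    (hf : (∫⁻ x, ENNReal.ofReal (Real.exp (β * ℓ x)) ∂μ) < ⊤) :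
    Integrable (fun x => Real.exp (β * ℓ x)) μ := by
  refine ⟨((hℓ.const_mul β).exp).aestronglyMeasurable, ?_⟩
  rw [hasFiniteIntegral_iff_ofReal (Eventually.of_forall fun x => (Real.exp_pos _).le)]
  exact hf

lemma q_integrable (hℓ : Measurable ℓ)
    (hf : (∫⁻ x, ENNReal.ofReal (Real.exp (β * ℓ x)) ∂μ) < ⊤) :
    Integrable (q μ ℓ β) μ :=
  (exp_integrable hℓ hf).div_const _

lemma q_integral (hℓ : Measurable ℓ)
    (hp : 0 < ∫⁻ x, ENNReal.ofReal (Real.exp (β * ℓ x)) ∂μ)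
    (hf : (∫⁻ x, ENNReal.ofReal (Real.exp (β * ℓ x)) ∂μ) < ⊤) :
    ∫ x, q μ ℓ β x ∂μ = 1 := by
  have h1 : ∫ x, Real.exp (β * ℓ x) ∂μ
      = (∫⁻ x, ENNReal.ofReal (Real.exp (β * ℓ x)) ∂μ).toReal := by
    rw [integral_eq_lintegral_of_nonneg_ae (Eventually.of_forall fun x => (Real.exp_pos _).le)
      ((hℓ.const_mul β).exp).aestronglyMeasurable]
  unfold q
  rw [integral_div, h1, div_self (Zr_pos hp hf).ne']

lemma tempered_eq (hp : 0 < ∫⁻ x, ENNReal.ofReal (Real.exp (β * ℓ x)) ∂μ)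
    (hf : (∫⁻ x, ENNReal.ofReal (Real.exp (β * ℓ x)) ∂μ) < ⊤) :
    tempered μ ℓ β = μ.withDensity (fun x => ENNReal.ofReal (q μ ℓ β x)) := by
  unfold tempered q
  congr 1
  funext x
  rw [ENNReal.ofReal_div_of_pos (Zr_pos hp hf), ENNReal.ofReal_toReal hf.ne]

lemma integral_tempered (hℓ : Measurable ℓ)
    (hp : 0 < ∫⁻ x, ENNReal.ofReal (Real.exp (β * ℓ x)) ∂μ)
    (hf : (∫⁻ x, ENNReal.ofReal (Real.exp (β * ℓ x)) ∂μ) < ⊤)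
    (g : 𝒳 → ℝ) :
    ∫ x, g x ∂tempered μ ℓ β = ∫ x, q μ ℓ β x * g x ∂μ := by
  rw [tempered_eq hp hf]
  have h1 : (fun x => ENNReal.ofReal (q μ ℓ β x))
      = fun x => ((fun x => (q μ ℓ β x).toNNReal) x : ℝ≥0∞) := rfl
  rw [h1, integral_withDensity_eq_integral_smul ((q_meas hℓ).real_toNNReal)]
  congr 1
  funext x
  simp [NNReal.smul_def, Real.coe_toNNReal _ (q_nonneg x)]

/-! ### Dominance (stochastic monotonicity along the path) -/

section Dom
variable [IsProbabilityMeasure μ]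

lemma q_mul_q_le (hℓ : Measurable ℓ) {β β' : ℝ} (hββ' : β ≤ β')
    (hpβ : 0 < ∫⁻ x, ENNReal.ofReal (Real.exp (β * ℓ x)) ∂μ)
    (hfβ : (∫⁻ x, ENNReal.ofReal (Real.exp (β * ℓ x)) ∂μ) < ⊤)
    (hpβ' : 0 < ∫⁻ x, ENNReal.ofReal (Real.exp (β' * ℓ x)) ∂μ)
    (hfβ' : (∫⁻ x, ENNReal.ofReal (Real.exp (β' * ℓ x)) ∂μ) < ⊤)
    {x y : 𝒳} (h : ℓ x ≤ ℓ y) :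
    q μ ℓ β' x * q μ ℓ β y ≤ q μ ℓ β x * q μ ℓ β' y := by
  have hZβ := Zr_pos hpβ hfβ
  have hZβ' := Zr_pos hpβ' hfβ'
  set Zb := (∫⁻ x, ENNReal.ofReal (Real.exp (β * ℓ x)) ∂μ).toReal
  set Zb' := (∫⁻ x, ENNReal.ofReal (Real.exp (β' * ℓ x)) ∂μ).toReal
  have hexp : Real.exp (β' * ℓ x) * Real.exp (β * ℓ y)
      ≤ Real.exp (β * ℓ x) * Real.exp (β' * ℓ y) := by
    rw [← Real.exp_add, ← Real.exp_add]
    apply Real.exp_le_exp.2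
    nlinarith
  unfold q
  rw [div_mul_div_comm, div_mul_div_comm, mul_comm Zb' Zb]
  exact (div_le_div_iff_of_pos_right (by positivity)).2 hexp

lemma dominance (hℓ : Measurable ℓ) {β β' : ℝ} (hββ' : β ≤ β')
    (hpβ : 0 < ∫⁻ x, ENNReal.ofReal (Real.exp (β * ℓ x)) ∂μ)
    (hfβ : (∫⁻ x, ENNReal.ofReal (Real.exp (β * ℓ x)) ∂μ) < ⊤)
    (hpβ' : 0 < ∫⁻ x, ENNReal.ofReal (Real.exp (β' * ℓ x)) ∂μ)
    (hfβ' : (∫⁻ x, ENNReal.ofReal (Real.exp (β' * ℓ x)) ∂μ) < ⊤)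
    {φ : 𝒳 → ℝ} (hφm : Measurable φ) (hφb : ∀ x, |φ x| ≤ 1)
    (hmono : ∀ x y, ℓ x ≤ ℓ y → φ x ≤ φ y) :
    ∫ x, q μ ℓ β x * φ x ∂μ ≤ ∫ x, q μ ℓ β' x * φ x ∂μ := by
  have hbdd : ∃ C, ∀ x, ‖φ x‖ ≤ C := ⟨1, fun x => by rw [Real.norm_eq_abs]; exact hφb x⟩
  have hint : Integrable (fun x => φ x * q μ ℓ β x) μ :=
    (q_integrable hℓ hfβ).bdd_mul hφm.aestronglyMeasurable (Eventually.of_forall hbdd.choose_spec)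
  have hint' : Integrable (fun x => φ x * q μ ℓ β' x) μ :=
    (q_integrable hℓ hfβ').bdd_mul hφm.aestronglyMeasurable (Eventually.of_forall hbdd.choose_spec)
  have key : 0 ≤ ∫ z : 𝒳 × 𝒳, ((φ z.1 * q μ ℓ β' z.1) * q μ ℓ β z.2
      - (φ z.1 * q μ ℓ β z.1) * q μ ℓ β' z.2
      - q μ ℓ β' z.1 * (φ z.2 * q μ ℓ β z.2))
      + q μ ℓ β z.1 * (φ z.2 * q μ ℓ β' z.2) ∂(μ.prod μ) := by
    apply integral_nonneg
    intro z
    simp only [Pi.zero_apply]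
    have hz : ((φ z.1 * q μ ℓ β' z.1) * q μ ℓ β z.2
        - (φ z.1 * q μ ℓ β z.1) * q μ ℓ β' z.2
        - q μ ℓ β' z.1 * (φ z.2 * q μ ℓ β z.2))
        + q μ ℓ β z.1 * (φ z.2 * q μ ℓ β' z.2)
        = (φ z.1 - φ z.2) * (q μ ℓ β' z.1 * q μ ℓ β z.2 - q μ ℓ β z.1 * q μ ℓ β' z.2) := by
      ring
    show (0:ℝ) ≤ φ z.1 * q μ ℓ β' z.1 * q μ ℓ β z.2 - φ z.1 * q μ ℓ β z.1 * q μ ℓ β' z.2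
      - q μ ℓ β' z.1 * (φ z.2 * q μ ℓ β z.2) + q μ ℓ β z.1 * (φ z.2 * q μ ℓ β' z.2)
    rw [hz]
    rcases le_total (ℓ z.1) (ℓ z.2) with h | h
    · have u1 : φ z.1 - φ z.2 ≤ 0 := sub_nonpos.2 (hmono _ _ h)
      have u2 : q μ ℓ β' z.1 * q μ ℓ β z.2 - q μ ℓ β z.1 * q μ ℓ β' z.2 ≤ 0 :=
        sub_nonpos.2 (q_mul_q_le hℓ hββ' hpβ hfβ hpβ' hfβ' h)
      nlinarith
    · have h2 := q_mul_q_le hℓ hββ' hpβ hfβ hpβ' hfβ' h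
      have h3 : q μ ℓ β z.1 * q μ ℓ β' z.2 ≤ q μ ℓ β' z.1 * q μ ℓ β z.2 := by
        calc q μ ℓ β z.1 * q μ ℓ β' z.2 = q μ ℓ β' z.2 * q μ ℓ β z.1 := mul_comm _ _
          _ ≤ q μ ℓ β z.2 * q μ ℓ β' z.1 := h2
          _ = q μ ℓ β' z.1 * q μ ℓ β z.2 := mul_comm _ _
      exact mul_nonneg (sub_nonneg.2 (hmono _ _ h)) (sub_nonneg.2 h3)
  have i1 : Integrable (fun z : 𝒳 × 𝒳 => (φ z.1 * q μ ℓ β' z.1) * q μ ℓ β z.2) (μ.prod μ) :=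
    hint'.mul_prod (q_integrable hℓ hfβ)
  have i2 : Integrable (fun z : 𝒳 × 𝒳 => (φ z.1 * q μ ℓ β z.1) * q μ ℓ β' z.2) (μ.prod μ) :=
    hint.mul_prod (q_integrable hℓ hfβ')
  have i3 : Integrable (fun z : 𝒳 × 𝒳 => q μ ℓ β' z.1 * (φ z.2 * q μ ℓ β z.2)) (μ.prod μ) :=
    (q_integrable hℓ hfβ').mul_prod hint
  have i4 : Integrable (fun z : 𝒳 × 𝒳 => q μ ℓ β z.1 * (φ z.2 * q μ ℓ β' z.2)) (μ.prod μ) :=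
    (q_integrable hℓ hfβ).mul_prod hint'
  have i12 : Integrable (fun z : 𝒳 × 𝒳 => (φ z.1 * q μ ℓ β' z.1) * q μ ℓ β z.2
      - (φ z.1 * q μ ℓ β z.1) * q μ ℓ β' z.2) (μ.prod μ) := i1.sub i2
  have i123 : Integrable (fun z : 𝒳 × 𝒳 => (φ z.1 * q μ ℓ β' z.1) * q μ ℓ β z.2
      - (φ z.1 * q μ ℓ β z.1) * q μ ℓ β' z.2
      - q μ ℓ β' z.1 * (φ z.2 * q μ ℓ β z.2)) (μ.prod μ) := i12.sub i3
  have e1 : ∫ z : 𝒳 × 𝒳, φ z.1 * q μ ℓ β' z.1 * q μ ℓ β z.2 ∂(μ.prod μ)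
      = (∫ x, φ x * q μ ℓ β' x ∂μ) * ∫ x, q μ ℓ β x ∂μ :=
    integral_prod_mul (fun x => φ x * q μ ℓ β' x) (q μ ℓ β)
  have e2 : ∫ z : 𝒳 × 𝒳, φ z.1 * q μ ℓ β z.1 * q μ ℓ β' z.2 ∂(μ.prod μ)
      = (∫ x, φ x * q μ ℓ β x ∂μ) * ∫ x, q μ ℓ β' x ∂μ :=
    integral_prod_mul (fun x => φ x * q μ ℓ β x) (q μ ℓ β')
  have e3 : ∫ z : 𝒳 × 𝒳, q μ ℓ β' z.1 * (φ z.2 * q μ ℓ β z.2) ∂(μ.prod μ)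
      = (∫ x, q μ ℓ β' x ∂μ) * ∫ x, φ x * q μ ℓ β x ∂μ :=
    integral_prod_mul (q μ ℓ β') (fun x => φ x * q μ ℓ β x)
  have e4 : ∫ z : 𝒳 × 𝒳, q μ ℓ β z.1 * (φ z.2 * q μ ℓ β' z.2) ∂(μ.prod μ)
      = (∫ x, q μ ℓ β x ∂μ) * ∫ x, φ x * q μ ℓ β' x ∂μ :=
    integral_prod_mul (q μ ℓ β) (fun x => φ x * q μ ℓ β' x)
  rw [integral_add i123 i4, integral_sub i12 i3, integral_sub i1 i2,
    e1, e2, e3, e4, q_integral hℓ hpβ hfβ, q_integral hℓ hpβ' hfβ'] at key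
  have e5 : ∀ x, φ x * q μ ℓ β x = q μ ℓ β x * φ x := fun x => mul_comm _ _
  have e6 : ∀ x, φ x * q μ ℓ β' x = q μ ℓ β' x * φ x := fun x => mul_comm _ _
  simp only [e5, e6] at key
  linarith

/-! ### Integrability of bounded multiples of product densities -/

lemma int_qq_bdd (hℓ : Measurable ℓ) {α β : ℝ}
    (hfα : (∫⁻ x, ENNReal.ofReal (Real.exp (α * ℓ x)) ∂μ) < ⊤)
    (hfβ : (∫⁻ x, ENNReal.ofReal (Real.exp (β * ℓ x)) ∂μ) < ⊤)
    {φ : 𝒳 × 𝒳 → ℝ} (hφm : Measurable φ) (hφb : ∀ z, |φ z| ≤ 1) :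
    Integrable (fun z : 𝒳 × 𝒳 => q μ ℓ α z.1 * q μ ℓ β z.2 * φ z) (μ.prod μ) := by
  have hqq : Integrable (fun z : 𝒳 × 𝒳 => q μ ℓ α z.1 * q μ ℓ β z.2) (μ.prod μ) :=
    (q_integrable hℓ hfα).mul_prod (q_integrable hℓ hfβ)
  refine hqq.mono ?_ (Eventually.of_forall fun z => ?_)
  · exact ((((q_meas hℓ).comp measurable_fst).mul
      ((q_meas hℓ).comp measurable_snd)).mul hφm).aestronglyMeasurable
  · rw [Real.norm_eq_abs, Real.norm_eq_abs, abs_mul]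
    exact mul_le_of_le_one_right (abs_nonneg _) (hφb z)

lemma sgn_prod_meas (hℓ : Measurable ℓ) :
    Measurable (fun z : 𝒳 × 𝒳 => sgn (ℓ z.2 - ℓ z.1)) :=
  sgn_measurable.comp ((hℓ.comp measurable_snd).sub (hℓ.comp measurable_fst))

/-! ### The signed representation of the rejection rate -/

lemma rej_eq (hℓ : Measurable ℓ) {a b : ℝ} (hab : a ≤ b)
    (hpa : 0 < ∫⁻ x, ENNReal.ofReal (Real.exp (a * ℓ x)) ∂μ)
    (hfa : (∫⁻ x, ENNReal.ofReal (Real.exp (a * ℓ x)) ∂μ) < ⊤)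
    (hpb : 0 < ∫⁻ x, ENNReal.ofReal (Real.exp (b * ℓ x)) ∂μ)
    (hfb : (∫⁻ x, ENNReal.ofReal (Real.exp (b * ℓ x)) ∂μ) < ⊤) :
    rejRate μ ℓ a b
      = ∫ z : 𝒳 × 𝒳, q μ ℓ a z.1 * q μ ℓ b z.2 * sgn (ℓ z.2 - ℓ z.1) ∂(μ.prod μ) := by
  unfold rejRate
  rw [integral_tempered hℓ hpa hfa]
  have h1 : ∀ x : 𝒳, (∫ y, min 1 (Real.exp (-(b - a) * (ℓ y - ℓ x))) ∂tempered μ ℓ b)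
      = ∫ y, q μ ℓ b y * min 1 (Real.exp (-(b - a) * (ℓ y - ℓ x))) ∂μ :=
    fun x => integral_tempered hℓ hpb hfb _
  simp only [h1]
  have h2 : ∀ x : 𝒳, q μ ℓ a x
        * (∫ y, q μ ℓ b y * min 1 (Real.exp (-(b - a) * (ℓ y - ℓ x))) ∂μ)
      = ∫ y, q μ ℓ a x * (q μ ℓ b y * min 1 (Real.exp (-(b - a) * (ℓ y - ℓ x)))) ∂μ :=
    fun x => (integral_const_mul _ _).symm
  simp only [h2]
  have hmmeas : Measurable (fun z : 𝒳 × 𝒳 => min 1 (Real.exp (-(b - a) * (ℓ z.2 - ℓ z.1)))) :=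
    measurable_const.min
      ((((hℓ.comp measurable_snd).sub (hℓ.comp measurable_fst)).const_mul (-(b - a))).exp)
  have hmbdd : ∀ z : 𝒳 × 𝒳, |min 1 (Real.exp (-(b - a) * (ℓ z.2 - ℓ z.1)))| ≤ 1 := by
    intro z
    rw [abs_of_nonneg (le_min zero_le_one (Real.exp_pos _).le)]
    exact min_le_left _ _
  have hI : Integrable (fun z : 𝒳 × 𝒳 =>
      q μ ℓ a z.1 * (q μ ℓ b z.2 * min 1 (Real.exp (-(b - a) * (ℓ z.2 - ℓ z.1)))))
      (μ.prod μ) := by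
    have := int_qq_bdd hℓ hfa hfb hmmeas hmbdd
    simpa [mul_assoc] using this
  rw [MeasureTheory.integral_integral hI]
  have h3 : ∀ z : 𝒳 × 𝒳,
      q μ ℓ a z.1 * (q μ ℓ b z.2 * min 1 (Real.exp (-(b - a) * (ℓ z.2 - ℓ z.1))))
        = (q μ ℓ a z.1 * q μ ℓ b z.2 + q μ ℓ b z.1 * q μ ℓ a z.2
           - (q μ ℓ a z.1 * q μ ℓ b z.2 - q μ ℓ b z.1 * q μ ℓ a z.2)
              * sgn (ℓ z.2 - ℓ z.1)) / 2 :=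
    fun z => key_real hab
  simp only [h3]
  rw [integral_div]
  have iU : Integrable (fun z : 𝒳 × 𝒳 => q μ ℓ a z.1 * q μ ℓ b z.2) (μ.prod μ) :=
    (q_integrable hℓ hfa).mul_prod (q_integrable hℓ hfb)
  have iV : Integrable (fun z : 𝒳 × 𝒳 => q μ ℓ b z.1 * q μ ℓ a z.2) (μ.prod μ) :=
    (q_integrable hℓ hfb).mul_prod (q_integrable hℓ hfa)
  have iUs : Integrable
      (fun z : 𝒳 × 𝒳 => q μ ℓ a z.1 * q μ ℓ b z.2 * sgn (ℓ z.2 - ℓ z.1)) (μ.prod μ) :=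
    int_qq_bdd hℓ hfa hfb (sgn_prod_meas hℓ) (fun z => sgn_abs_le _)
  have iVs : Integrable
      (fun z : 𝒳 × 𝒳 => q μ ℓ b z.1 * q μ ℓ a z.2 * sgn (ℓ z.2 - ℓ z.1)) (μ.prod μ) :=
    int_qq_bdd hℓ hfb hfa (sgn_prod_meas hℓ) (fun z => sgn_abs_le _)
  have iUVs : Integrable (fun z : 𝒳 × 𝒳 => q μ ℓ a z.1 * q μ ℓ b z.2 * sgn (ℓ z.2 - ℓ z.1)
      - q μ ℓ b z.1 * q μ ℓ a z.2 * sgn (ℓ z.2 - ℓ z.1)) (μ.prod μ) := iUs.sub iVs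
  have iW : Integrable (fun z : 𝒳 × 𝒳 =>
      (q μ ℓ a z.1 * q μ ℓ b z.2 - q μ ℓ b z.1 * q μ ℓ a z.2) * sgn (ℓ z.2 - ℓ z.1))
      (μ.prod μ) := by
    have h4 : ∀ z : 𝒳 × 𝒳,
        (q μ ℓ a z.1 * q μ ℓ b z.2 - q μ ℓ b z.1 * q μ ℓ a z.2) * sgn (ℓ z.2 - ℓ z.1)
          = q μ ℓ a z.1 * q μ ℓ b z.2 * sgn (ℓ z.2 - ℓ z.1)
            - q μ ℓ b z.1 * q μ ℓ a z.2 * sgn (ℓ z.2 - ℓ z.1) := fun z => by ring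
    simp only [h4]
    exact iUVs
  have iUV : Integrable (fun z : 𝒳 × 𝒳 => q μ ℓ a z.1 * q μ ℓ b z.2
      + q μ ℓ b z.1 * q μ ℓ a z.2) (μ.prod μ) := iU.add iV
  rw [integral_sub iUV iW, integral_add iU iV]
  have eU : ∫ z : 𝒳 × 𝒳, q μ ℓ a z.1 * q μ ℓ b z.2 ∂(μ.prod μ)
      = (∫ x, q μ ℓ a x ∂μ) * ∫ x, q μ ℓ b x ∂μ := integral_prod_mul _ _
  have eV : ∫ z : 𝒳 × 𝒳, q μ ℓ b z.1 * q μ ℓ a z.2 ∂(μ.prod μ)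
      = (∫ x, q μ ℓ b x ∂μ) * ∫ x, q μ ℓ a x ∂μ := integral_prod_mul _ _
  rw [eU, eV, q_integral hℓ hpa hfa, q_integral hℓ hpb hfb]
  -- the swap identity
  have hswap : ∫ z : 𝒳 × 𝒳, q μ ℓ b z.1 * q μ ℓ a z.2 * sgn (ℓ z.2 - ℓ z.1) ∂(μ.prod μ)
      = - ∫ z : 𝒳 × 𝒳, q μ ℓ a z.1 * q μ ℓ b z.2 * sgn (ℓ z.2 - ℓ z.1) ∂(μ.prod μ) := by
    have h0 : ∀ z : 𝒳 × 𝒳, q μ ℓ b z.1 * q μ ℓ a z.2 * sgn (ℓ z.2 - ℓ z.1)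
        = -((fun w : 𝒳 × 𝒳 => q μ ℓ a w.1 * q μ ℓ b w.2 * sgn (ℓ w.2 - ℓ w.1)) z.swap) := by
      intro z
      show _ = -(q μ ℓ a z.2 * q μ ℓ b z.1 * sgn (ℓ z.1 - ℓ z.2))
      have hs : sgn (ℓ z.1 - ℓ z.2) = - sgn (ℓ z.2 - ℓ z.1) := by
        rw [show ℓ z.1 - ℓ z.2 = -(ℓ z.2 - ℓ z.1) by ring, sgn_neg]
      rw [hs]; ring
    simp only [h0]
    rw [integral_neg]
    exact congrArg Neg.neg (integral_prod_swap
      (fun w : 𝒳 × 𝒳 => q μ ℓ a w.1 * q μ ℓ b w.2 * sgn (ℓ w.2 - ℓ w.1)))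
  have hW : ∫ z : 𝒳 × 𝒳,
      (q μ ℓ a z.1 * q μ ℓ b z.2 - q μ ℓ b z.1 * q μ ℓ a z.2) * sgn (ℓ z.2 - ℓ z.1)
      ∂(μ.prod μ)
      = 2 * ∫ z : 𝒳 × 𝒳, q μ ℓ a z.1 * q μ ℓ b z.2 * sgn (ℓ z.2 - ℓ z.1) ∂(μ.prod μ) := by
    have h4 : ∀ z : 𝒳 × 𝒳,
        (q μ ℓ a z.1 * q μ ℓ b z.2 - q μ ℓ b z.1 * q μ ℓ a z.2) * sgn (ℓ z.2 - ℓ z.1)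
          = q μ ℓ a z.1 * q μ ℓ b z.2 * sgn (ℓ z.2 - ℓ z.1)
            - q μ ℓ b z.1 * q μ ℓ a z.2 * sgn (ℓ z.2 - ℓ z.1) := fun z => by ring
    simp only [h4]
    rw [integral_sub iUs iVs, hswap]
    ring
  rw [hW]
  ring

/-! ### Monotonicity in each endpoint -/

lemma T_mono_right (hℓ : Measurable ℓ) {a b b' : ℝ} (hbb' : b ≤ b')
    (hfa : (∫⁻ x, ENNReal.ofReal (Real.exp (a * ℓ x)) ∂μ) < ⊤)
    (hpb : 0 < ∫⁻ x, ENNReal.ofReal (Real.exp (b * ℓ x)) ∂μ)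
    (hfb : (∫⁻ x, ENNReal.ofReal (Real.exp (b * ℓ x)) ∂μ) < ⊤)
    (hpb' : 0 < ∫⁻ x, ENNReal.ofReal (Real.exp (b' * ℓ x)) ∂μ)
    (hfb' : (∫⁻ x, ENNReal.ofReal (Real.exp (b' * ℓ x)) ∂μ) < ⊤) :
    ∫ z : 𝒳 × 𝒳, q μ ℓ a z.1 * q μ ℓ b z.2 * sgn (ℓ z.2 - ℓ z.1) ∂(μ.prod μ)
      ≤ ∫ z : 𝒳 × 𝒳, q μ ℓ a z.1 * q μ ℓ b' z.2 * sgn (ℓ z.2 - ℓ z.1) ∂(μ.prod μ) := by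
  have hIb := int_qq_bdd (β := b) hℓ hfa hfb (sgn_prod_meas hℓ) (fun z => sgn_abs_le _)
  have hIb' := int_qq_bdd (β := b') hℓ hfa hfb' (sgn_prod_meas hℓ) (fun z => sgn_abs_le _)
  have hiter : (∫ z : 𝒳 × 𝒳, q μ ℓ a z.1 * q μ ℓ b z.2 * sgn (ℓ z.2 - ℓ z.1) ∂(μ.prod μ))
      = ∫ x, ∫ y, q μ ℓ a x * q μ ℓ b y * sgn (ℓ y - ℓ x) ∂μ ∂μ :=
    (MeasureTheory.integral_integral
      (f := fun x y => q μ ℓ a x * q μ ℓ b y * sgn (ℓ y - ℓ x)) hIb).symm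
  have hiter' : (∫ z : 𝒳 × 𝒳, q μ ℓ a z.1 * q μ ℓ b' z.2 * sgn (ℓ z.2 - ℓ z.1) ∂(μ.prod μ))
      = ∫ x, ∫ y, q μ ℓ a x * q μ ℓ b' y * sgn (ℓ y - ℓ x) ∂μ ∂μ :=
    (MeasureTheory.integral_integral
      (f := fun x y => q μ ℓ a x * q μ ℓ b' y * sgn (ℓ y - ℓ x)) hIb').symm
  rw [hiter, hiter']
  have hpull : ∀ (β : ℝ) (x : 𝒳), (∫ y, q μ ℓ a x * q μ ℓ β y * sgn (ℓ y - ℓ x) ∂μ)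
      = q μ ℓ a x * ∫ y, q μ ℓ β y * sgn (ℓ y - ℓ x) ∂μ := by
    intro β x
    rw [← integral_const_mul]
    congr 1
    funext y
    ring
  apply integral_mono (hIb.integral_prod_left) (hIb'.integral_prod_left)
  intro x
  show (∫ y, q μ ℓ a x * q μ ℓ b y * sgn (ℓ y - ℓ x) ∂μ)
      ≤ ∫ y, q μ ℓ a x * q μ ℓ b' y * sgn (ℓ y - ℓ x) ∂μ
  rw [hpull b x, hpull b' x]
  apply mul_le_mul_of_nonneg_left _ (q_nonneg x)
  exact dominance (φ := fun y => sgn (ℓ y - ℓ x)) hℓ hbb' hpb hfb hpb' hfb'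
    (sgn_measurable.comp (hℓ.sub_const (ℓ x)))
    (fun y => sgn_abs_le _)
    (fun y y' h => sgn_mono (by linarith : ℓ y - ℓ x ≤ ℓ y' - ℓ x))

lemma T_mono_left (hℓ : Measurable ℓ) {a' a b : ℝ} (haa' : a' ≤ a)
    (hpa : 0 < ∫⁻ x, ENNReal.ofReal (Real.exp (a * ℓ x)) ∂μ)
    (hfa : (∫⁻ x, ENNReal.ofReal (Real.exp (a * ℓ x)) ∂μ) < ⊤)
    (hpa' : 0 < ∫⁻ x, ENNReal.ofReal (Real.exp (a' * ℓ x)) ∂μ)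
    (hfa' : (∫⁻ x, ENNReal.ofReal (Real.exp (a' * ℓ x)) ∂μ) < ⊤)
    (hfb : (∫⁻ x, ENNReal.ofReal (Real.exp (b * ℓ x)) ∂μ) < ⊤) :
    ∫ z : 𝒳 × 𝒳, q μ ℓ a z.1 * q μ ℓ b z.2 * sgn (ℓ z.2 - ℓ z.1) ∂(μ.prod μ)
      ≤ ∫ z : 𝒳 × 𝒳, q μ ℓ a' z.1 * q μ ℓ b z.2 * sgn (ℓ z.2 - ℓ z.1) ∂(μ.prod μ) := by
  -- swap coordinates
  have hsw : ∀ (α : ℝ),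
      (∫ z : 𝒳 × 𝒳, q μ ℓ α z.1 * q μ ℓ b z.2 * sgn (ℓ z.2 - ℓ z.1) ∂(μ.prod μ))
        = ∫ z : 𝒳 × 𝒳, q μ ℓ b z.1 * q μ ℓ α z.2 * (- sgn (ℓ z.2 - ℓ z.1)) ∂(μ.prod μ) := by
    intro α
    rw [← integral_prod_swap
      (fun z : 𝒳 × 𝒳 => q μ ℓ α z.1 * q μ ℓ b z.2 * sgn (ℓ z.2 - ℓ z.1))]
    congr 1
    funext z
    show q μ ℓ α z.2 * q μ ℓ b z.1 * sgn (ℓ z.1 - ℓ z.2) = _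
    have hs : sgn (ℓ z.1 - ℓ z.2) = - sgn (ℓ z.2 - ℓ z.1) := by
      rw [show ℓ z.1 - ℓ z.2 = -(ℓ z.2 - ℓ z.1) by ring, sgn_neg]
    rw [hs]; ring
  rw [hsw a, hsw a']
  have hnm : Measurable (fun z : 𝒳 × 𝒳 => - sgn (ℓ z.2 - ℓ z.1)) := (sgn_prod_meas hℓ).neg
  have hnb : ∀ z : 𝒳 × 𝒳, |(- sgn (ℓ z.2 - ℓ z.1))| ≤ 1 := fun z => by
    rw [abs_neg]; exact sgn_abs_le _
  have hIa := int_qq_bdd (α := b) hℓ hfb hfa hnm hnb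
  have hIa' := int_qq_bdd (α := b) hℓ hfb hfa' hnm hnb
  have hiter : (∫ z : 𝒳 × 𝒳, q μ ℓ b z.1 * q μ ℓ a z.2 * (- sgn (ℓ z.2 - ℓ z.1)) ∂(μ.prod μ))
      = ∫ x, ∫ y, q μ ℓ b x * q μ ℓ a y * (- sgn (ℓ y - ℓ x)) ∂μ ∂μ :=
    (MeasureTheory.integral_integral
      (f := fun x y => q μ ℓ b x * q μ ℓ a y * (- sgn (ℓ y - ℓ x))) hIa).symm
  have hiter' : (∫ z : 𝒳 × 𝒳, q μ ℓ b z.1 * q μ ℓ a' z.2 * (- sgn (ℓ z.2 - ℓ z.1)) ∂(μ.prod μ))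
      = ∫ x, ∫ y, q μ ℓ b x * q μ ℓ a' y * (- sgn (ℓ y - ℓ x)) ∂μ ∂μ :=
    (MeasureTheory.integral_integral
      (f := fun x y => q μ ℓ b x * q μ ℓ a' y * (- sgn (ℓ y - ℓ x))) hIa').symm
  rw [hiter, hiter']
  have hpull : ∀ (α : ℝ) (x : 𝒳), (∫ y, q μ ℓ b x * q μ ℓ α y * (- sgn (ℓ y - ℓ x)) ∂μ)
      = q μ ℓ b x * ∫ y, q μ ℓ α y * (- sgn (ℓ y - ℓ x)) ∂μ := by
    intro α x
    rw [← integral_const_mul]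
    congr 1
    funext y
    ring
  apply integral_mono (hIa.integral_prod_left) (hIa'.integral_prod_left)
  intro x
  show (∫ y, q μ ℓ b x * q μ ℓ a y * (- sgn (ℓ y - ℓ x)) ∂μ)
      ≤ ∫ y, q μ ℓ b x * q μ ℓ a' y * (- sgn (ℓ y - ℓ x)) ∂μ
  rw [hpull a x, hpull a' x]
  apply mul_le_mul_of_nonneg_left _ (q_nonneg x)
  -- φ y = - sgn (ℓ y - ℓ x) is antitone; reduce to dominance for the monotone sgn
  have hneg : ∀ (α : ℝ), (∫ y, q μ ℓ α y * (- sgn (ℓ y - ℓ x)) ∂μ)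
      = - ∫ y, q μ ℓ α y * sgn (ℓ y - ℓ x) ∂μ := by
    intro α
    rw [← integral_neg]
    congr 1
    funext y
    ring
  rw [hneg a, hneg a']
  apply neg_le_neg
  exact dominance (φ := fun y => sgn (ℓ y - ℓ x)) hℓ haa' hpa' hfa' hpa hfa
    (sgn_measurable.comp (hℓ.sub_const (ℓ x)))
    (fun y => sgn_abs_le _)
    (fun y y' h => sgn_mono (by linarith : ℓ y - ℓ x ≤ ℓ y' - ℓ x))

end Dom
end Stmt11Aux

open Stmt11Aux in
/-- Monotonicity of swap rejection rates under interval inclusion: if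
`0 ≤ a' ≤ a ≤ b ≤ b' ≤ 1` then `r(a, b) ≤ r(a', b')`. -/
theorem stmt_11 {𝒳 : Type*} [MeasurableSpace 𝒳]
    (μ : Measure 𝒳) [IsProbabilityMeasure μ]
    (ℓ : 𝒳 → ℝ) (hℓ : Measurable ℓ)
    (hZpos : ∀ β ∈ Set.Icc (0 : ℝ) 1,
      0 < ∫⁻ x, ENNReal.ofReal (Real.exp (β * ℓ x)) ∂μ)
    (hZfin : ∀ β ∈ Set.Icc (0 : ℝ) 1,
      (∫⁻ x, ENNReal.ofReal (Real.exp (β * ℓ x)) ∂μ) < ⊤)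
    (a' a b b' : ℝ) (h0 : 0 ≤ a') (h1 : a' ≤ a) (h2 : a ≤ b) (h3 : b ≤ b') (h4 : b' ≤ 1) :
    rejRate μ ℓ a b ≤ rejRate μ ℓ a' b' := by
  have ma' : a' ∈ Set.Icc (0:ℝ) 1 := ⟨h0, by linarith⟩
  have ma : a ∈ Set.Icc (0:ℝ) 1 := ⟨by linarith, by linarith⟩
  have mb : b ∈ Set.Icc (0:ℝ) 1 := ⟨by linarith, by linarith⟩
  have mb' : b' ∈ Set.Icc (0:ℝ) 1 := ⟨by linarith, h4⟩
  rw [rej_eq hℓ h2 (hZpos a ma) (hZfin a ma) (hZpos b mb) (hZfin b mb),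
    rej_eq hℓ (by linarith : a' ≤ b') (hZpos a' ma') (hZfin a' ma')
      (hZpos b' mb') (hZfin b' mb')]
  calc ∫ z : 𝒳 × 𝒳, q μ ℓ a z.1 * q μ ℓ b z.2 * sgn (ℓ z.2 - ℓ z.1) ∂(μ.prod μ)
      ≤ ∫ z : 𝒳 × 𝒳, q μ ℓ a z.1 * q μ ℓ b' z.2 * sgn (ℓ z.2 - ℓ z.1) ∂(μ.prod μ) :=
        T_mono_right hℓ h3 (hZfin a ma) (hZpos b mb) (hZfin b mb)
          (hZpos b' mb') (hZfin b' mb')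
    _ ≤ ∫ z : 𝒳 × 𝒳, q μ ℓ a' z.1 * q μ ℓ b' z.2 * sgn (ℓ z.2 - ℓ z.1) ∂(μ.prod μ) :=
        T_mono_left hℓ h1 (hZpos a ma) (hZfin a ma) (hZpos a' ma') (hZfin a' ma')
          (hZfin b' mb')
end

section
/- The global communication barrier is bounded by the square root of half the symmetrized KL divergence: Λ(π₀, π₁) ≤ sqrt( (1/2) · SKL(π₀, π₁) ), where SKL(π₀, π₁) = E_{π₁}[ℓ] − E_{π₀}[ℓ] = KL(π₁‖π₀) + KL(π₀‖π₁). -/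
open MeasureTheory Filter Topology ENNReal

/-- Cauchy–Schwarz for a probability measure: `(∫ h)² ≤ ∫ h²`. -/
lemma sq_integral_le_aux {α : Type*} [MeasurableSpace α] (ν : Measure α) [IsProbabilityMeasure ν]
    {h : α → ℝ} (hh : Integrable h ν) (hh2 : Integrable (fun a => h a ^ 2) ν) :
    (∫ a, h a ∂ν) ^ 2 ≤ ∫ a, h a ^ 2 ∂ν := by
  set c := ∫ a, h a ∂ν with hc
  have e0 : 0 ≤ ∫ a, (h a - c) ^ 2 ∂ν := integral_nonneg fun a => sq_nonneg _
  have expand : ∫ a, (h a - c) ^ 2 ∂ν = (∫ a, h a ^ 2 ∂ν) - 2 * c * c + c ^ 2 := by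
    have key : ∀ a, (h a - c) ^ 2 = (h a ^ 2 - 2 * c * h a) + c ^ 2 := fun a => by ring
    simp_rw [key]
    have ha : Integrable (fun a => h a ^ 2 - 2 * c * h a) ν := hh2.sub (hh.const_mul (2 * c))
    have hb : Integrable (fun a => 2 * c * h a) ν := hh.const_mul (2 * c)
    rw [integral_add ha (integrable_const _), integral_sub hh2 hb, integral_const_mul,
      integral_const]
    simp [← hc]
  nlinarith [e0, expand]

lemma integral_le_sqrt_aux {α : Type*} [MeasurableSpace α] (ν : Measure α) [IsProbabilityMeasure ν]
    {h : α → ℝ} (hh : Integrable h ν) (hh2 : Integrable (fun a => h a ^ 2) ν) :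
    ∫ a, h a ∂ν ≤ Real.sqrt (∫ a, h a ^ 2 ∂ν) :=
  calc ∫ a, h a ∂ν ≤ |∫ a, h a ∂ν| := le_abs_self _
    _ = Real.sqrt ((∫ a, h a ∂ν) ^ 2) := (Real.sqrt_sq_eq_abs _).symm
    _ ≤ _ := Real.sqrt_le_sqrt (sq_integral_le_aux ν hh hh2)

/-- The global communication barrier is bounded by the square root of half the symmetrized
KL divergence: `Λ(π₀, π₁) ≤ sqrt((1/2) · SKL(π₀, π₁))`, where
`SKL(π₀, π₁) = E_{π₁}[ℓ] − E_{π₀}[ℓ]` and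
`Λ(π₀, π₁) = (1/2) ∫₀¹ E[|ℓ(X_β) − ℓ(X'_β)|] dβ` with `X_β, X'_β` i.i.d. from the
annealing path `π_β ∝ π₀ e^{βℓ}`, `ℓ = log(π₁/π₀)` on the common support. -/
theorem stmt_12 {𝒳 : Type*} [MeasurableSpace 𝒳] (μ : Measure 𝒳) [SigmaFinite μ]
    (p₀ p₁ : 𝒳 → ℝ) (h0meas : Measurable p₀) (h1meas : Measurable p₁)
    (h0nn : ∀ x, 0 ≤ p₀ x) (h1nn : ∀ x, 0 ≤ p₁ x)
    (h0int : Integrable p₀ μ) (h1int : Integrable p₁ μ)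
    (h0dens : ∫ x, p₀ x ∂μ = 1) (h1dens : ∫ x, p₁ x ∂μ = 1)
    (hsupp : ∀ x, 0 < p₀ x ↔ 0 < p₁ x)
    (ℓ : 𝒳 → ℝ) (hℓmeas : Measurable ℓ)
    (hℓ : ∀ x, 0 < p₀ x → ℓ x = Real.log (p₁ x / p₀ x))
    (Z : ℝ → ℝ≥0∞)
    (hZ : ∀ β, Z β = ∫⁻ x, ENNReal.ofReal (p₀ x * Real.exp (β * ℓ x)) ∂μ)
    (hZpos : ∀ β ∈ Set.Icc (0 : ℝ) 1, 0 < Z β)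
    (hZfin : ∀ β ∈ Set.Icc (0 : ℝ) 1, Z β < ⊤)
    (hmom0 : Integrable (fun x => |ℓ x| ^ 3 * p₀ x) μ)
    (hmom1 : Integrable (fun x => |ℓ x| ^ 3 * p₁ x) μ)
    (π : ℝ → Measure 𝒳)
    (hπ : ∀ β, π β =
      μ.withDensity fun x => ENNReal.ofReal (p₀ x * Real.exp (β * ℓ x)) / Z β) :
    (1 / 2) * (∫ β in (0 : ℝ)..1, ∫ x, ∫ x', |ℓ x - ℓ x'| ∂π β ∂π β) ≤
      Real.sqrt ((1 / 2) * ((∫ x, ℓ x * p₁ x ∂μ) - ∫ x, ℓ x * p₀ x ∂μ)) := by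
  -- basic pointwise facts
  have hp1 : ∀ x, p₀ x * Real.exp (1 * ℓ x) = p₁ x := by
    intro x
    rcases eq_or_lt_of_le (h0nn x) with h | h
    · have hp1z : p₁ x = 0 := by
        by_contra hne
        have h1pos : 0 < p₁ x := lt_of_le_of_ne (h1nn x) (Ne.symm hne)
        have := (hsupp x).2 h1pos
        rw [← h] at this
        exact lt_irrefl 0 this
      rw [← h, zero_mul, hp1z]
    · have hp1pos : 0 < p₁ x := (hsupp x).1 h
      rw [one_mul, hℓ x h, Real.exp_log (div_pos hp1pos h), mul_div_cancel₀ _ (ne_of_gt h)]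
  have hexp_le : ∀ β ∈ Set.Icc (0:ℝ) 1, ∀ x, p₀ x * Real.exp (β * ℓ x) ≤ p₀ x + p₁ x := by
    intro β hβ x
    rcases eq_or_lt_of_le (h0nn x) with h | h
    · rw [← h, zero_mul, zero_add]; exact h1nn x
    · have hp1pos : 0 < p₁ x := (hsupp x).1 h
      have hle : β * ℓ x ≤ max 0 (ℓ x) := by
        rcases le_or_gt 0 (ℓ x) with hl | hl
        · exact le_max_of_le_right (by nlinarith [hβ.1, hβ.2])
        · exact le_max_of_le_left (by nlinarith [hβ.1])
      have h2 : Real.exp (β * ℓ x) ≤ 1 + Real.exp (ℓ x) := by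
        have := Real.exp_le_exp.mpr hle
        rcases max_cases 0 (ℓ x) with ⟨he, _⟩ | ⟨he, _⟩ <;> rw [he] at this
        · rw [Real.exp_zero] at this; linarith [Real.exp_pos (ℓ x)]
        · linarith
      have hexpl : p₀ x * Real.exp (ℓ x) = p₁ x := by
        rw [hℓ x h, Real.exp_log (div_pos hp1pos h), mul_div_cancel₀ _ (ne_of_gt h)]
      nlinarith [mul_le_mul_of_nonneg_left h2 h.le]
  -- the dominating function
  set M : 𝒳 → ℝ := fun x => (1 + |ℓ x| ^ 3) * (p₀ x + p₁ x) with hMdef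
  have hMint : Integrable M μ := by
    have : M = fun x => (p₀ x + p₁ x) + (|ℓ x| ^ 3 * p₀ x + |ℓ x| ^ 3 * p₁ x) := by
      funext x; simp only [hMdef]; ring
    rw [this]
    exact (h0int.add h1int).add (hmom0.add hmom1)
  have hMnn : ∀ x, 0 ≤ M x := fun x => by
    have := h0nn x; have := h1nn x
    have : (0:ℝ) ≤ |ℓ x| ^ 3 := by positivity
    simp only [hMdef]; nlinarith [h0nn x, h1nn x]
  have habs_le : ∀ (k : ℕ), k ≤ 3 → ∀ x, |ℓ x| ^ k ≤ 1 + |ℓ x| ^ 3 := by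
    intro k hk x
    rcases le_total (|ℓ x|) 1 with hl | hl
    · have h1 : |ℓ x| ^ k ≤ 1 := pow_le_one₀ (abs_nonneg _) hl
      nlinarith [pow_nonneg (abs_nonneg (ℓ x)) 3]
    · have h1 : |ℓ x| ^ k ≤ |ℓ x| ^ 3 := pow_le_pow_right₀ hl hk
      linarith
  have hbound : ∀ (k : ℕ), k ≤ 3 → ∀ β ∈ Set.Icc (0:ℝ) 1, ∀ x,
      |ℓ x ^ k * (p₀ x * Real.exp (β * ℓ x))| ≤ M x := by
    intro k hk β hβ x
    have hfx : 0 ≤ p₀ x * Real.exp (β * ℓ x) := mul_nonneg (h0nn x) (Real.exp_pos _).le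
    rw [abs_mul, abs_pow, abs_of_nonneg hfx]
    calc |ℓ x| ^ k * (p₀ x * Real.exp (β * ℓ x))
        ≤ (1 + |ℓ x| ^ 3) * (p₀ x + p₁ x) :=
          mul_le_mul (habs_le k hk x) (hexp_le β hβ x) hfx (by positivity)
      _ = M x := rfl
  -- measurability
  have hfmeas : ∀ β : ℝ, Measurable fun x => p₀ x * Real.exp (β * ℓ x) :=
    fun β => h0meas.mul ((hℓmeas.const_mul β).exp)
  have hgmeas : ∀ (k : ℕ) (β : ℝ), Measurable fun x => ℓ x ^ k * (p₀ x * Real.exp (β * ℓ x)) :=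
    fun k β => (hℓmeas.pow_const k).mul (hfmeas β)
  have hNint : ∀ (k : ℕ), k ≤ 3 → ∀ β ∈ Set.Icc (0:ℝ) 1,
      Integrable (fun x => ℓ x ^ k * (p₀ x * Real.exp (β * ℓ x))) μ := by
    intro k hk β hβ
    refine hMint.mono ((hgmeas k β).aestronglyMeasurable) (ae_of_all _ fun x => ?_)
    rw [Real.norm_eq_abs, Real.norm_eq_abs, abs_of_nonneg (hMnn x)]
    exact hbound k hk β hβ x
  -- the moment functions
  set N : ℕ → ℝ → ℝ := fun k β => ∫ x, ℓ x ^ k * (p₀ x * Real.exp (β * ℓ x)) ∂μ with hNdef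
  have hN0eq : ∀ β : ℝ, N 0 β = ∫ x, p₀ x * Real.exp (β * ℓ x) ∂μ := by
    intro β; simp only [hNdef, pow_zero, one_mul]
  have hfint : ∀ β ∈ Set.Icc (0:ℝ) 1, Integrable (fun x => p₀ x * Real.exp (β * ℓ x)) μ := by
    intro β hβ
    have := hNint 0 (by norm_num) β hβ
    simpa using this
  have hZof : ∀ β ∈ Set.Icc (0:ℝ) 1, Z β = ENNReal.ofReal (N 0 β) := by
    intro β hβ
    rw [hZ β, hN0eq β]
    exact (ofReal_integral_eq_lintegral_ofReal (hfint β hβ)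
      (ae_of_all _ fun x => mul_nonneg (h0nn x) (Real.exp_pos _).le)).symm
  have hN0pos : ∀ β ∈ Set.Icc (0:ℝ) 1, 0 < N 0 β := by
    intro β hβ
    have := hZpos β hβ
    rw [hZof β hβ] at this
    exact ENNReal.ofReal_pos.mp this
  -- rewrite π β as withDensity of an ℝ≥0 density
  have hπ' : ∀ β ∈ Set.Icc (0:ℝ) 1, π β = μ.withDensity
      (fun x => ((Real.toNNReal ((p₀ x * Real.exp (β * ℓ x)) / N 0 β) : NNReal) : ℝ≥0∞)) := by
    intro β hβ
    rw [hπ β]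
    congr 1
    funext x
    rw [hZof β hβ, ← ENNReal.ofReal_div_of_pos (hN0pos β hβ)]
    rfl
  have hdmeas : ∀ β : ℝ, Measurable fun x => Real.toNNReal ((p₀ x * Real.exp (β * ℓ x)) / N 0 β) :=
    fun β => ((hfmeas β).div_const _).real_toNNReal
  have hdnn : ∀ β ∈ Set.Icc (0:ℝ) 1, ∀ x, 0 ≤ (p₀ x * Real.exp (β * ℓ x)) / N 0 β :=
    fun β hβ x => div_nonneg (mul_nonneg (h0nn x) (Real.exp_pos _).le) (hN0pos β hβ).le
  have hπint : ∀ β ∈ Set.Icc (0:ℝ) 1, ∀ g : 𝒳 → ℝ,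
      (∫ x, g x ∂π β) = (∫ x, g x * (p₀ x * Real.exp (β * ℓ x)) ∂μ) / N 0 β := by
    intro β hβ g
    rw [hπ' β hβ, integral_withDensity_eq_integral_smul (hdmeas β) g, ← integral_div]
    apply integral_congr_ae
    apply ae_of_all
    intro x
    simp only [NNReal.smul_def, Real.coe_toNNReal _ (hdnn β hβ x), smul_eq_mul]
    ring
  have hπprob : ∀ β ∈ Set.Icc (0:ℝ) 1, IsProbabilityMeasure (π β) := by
    intro β hβ
    constructor
    rw [hπ' β hβ, withDensity_apply _ MeasurableSet.univ, setLIntegral_univ]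
    have hint : Integrable (fun x => (p₀ x * Real.exp (β * ℓ x)) / N 0 β) μ :=
      (hfint β hβ).div_const _
    have : ∫⁻ x, ((Real.toNNReal ((p₀ x * Real.exp (β * ℓ x)) / N 0 β) : NNReal) : ℝ≥0∞) ∂μ
        = ENNReal.ofReal (∫ x, (p₀ x * Real.exp (β * ℓ x)) / N 0 β ∂μ) :=
      (ofReal_integral_eq_lintegral_ofReal hint (ae_of_all _ (hdnn β hβ))).symm
    rw [this, integral_div, ← hN0eq β, div_self (hN0pos β hβ).ne', ENNReal.ofReal_one]
  have hπintg : ∀ β ∈ Set.Icc (0:ℝ) 1, ∀ g : 𝒳 → ℝ, Measurable g →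
      Integrable (fun x => g x * (p₀ x * Real.exp (β * ℓ x))) μ → Integrable g (π β) := by
    intro β hβ g hgm hgint
    rw [hπ' β hβ, integrable_withDensity_iff_integrable_smul (hdmeas β)]
    have : (fun x => (Real.toNNReal ((p₀ x * Real.exp (β * ℓ x)) / N 0 β)) • g x)
        = fun x => (g x * (p₀ x * Real.exp (β * ℓ x))) / N 0 β := by
      funext x
      simp only [NNReal.smul_def, Real.coe_toNNReal _ (hdnn β hβ x), smul_eq_mul]
      ring
    rw [this]
    exact hgint.div_const _
  -- integrability and moments under π β
  have hℓint : ∀ β ∈ Set.Icc (0:ℝ) 1, Integrable ℓ (π β) := by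
    intro β hβ
    refine hπintg β hβ ℓ hℓmeas ?_
    have := hNint 1 (by norm_num) β hβ
    simpa [pow_one] using this
  have hℓ2int : ∀ β ∈ Set.Icc (0:ℝ) 1, Integrable (fun x => ℓ x ^ 2) (π β) := by
    intro β hβ
    exact hπintg β hβ _ (hℓmeas.pow_const 2) (hNint 2 (by norm_num) β hβ)
  have hEℓ : ∀ β ∈ Set.Icc (0:ℝ) 1, ∫ x, ℓ x ∂π β = N 1 β / N 0 β := by
    intro β hβ
    rw [hπint β hβ ℓ]
    congr 1
    simp only [hNdef, pow_one]
  have hEℓ2 : ∀ β ∈ Set.Icc (0:ℝ) 1, ∫ x, ℓ x ^ 2 ∂π β = N 2 β / N 0 β := by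
    intro β hβ
    rw [hπint β hβ _]
  -- the variance function
  set V : ℝ → ℝ := fun β => N 2 β / N 0 β - (N 1 β / N 0 β) ^ 2 with hVdef
  have hVnn : ∀ β ∈ Set.Icc (0:ℝ) 1, 0 ≤ V β := by
    intro β hβ
    haveI := hπprob β hβ
    have := sq_integral_le_aux (π β) (hℓint β hβ) (hℓ2int β hβ)
    rw [hEℓ β hβ, hEℓ2 β hβ] at this
    simp only [hVdef]
    linarith
  -- per-β Cauchy–Schwarz bound
  have Ibound : ∀ β ∈ Set.Icc (0:ℝ) 1,
      (∫ x, ∫ x', |ℓ x - ℓ x'| ∂π β ∂π β) ≤ Real.sqrt (2 * V β) := by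
    intro β hβ
    haveI := hπprob β hβ
    set ν := π β with hνdef
    have h1 : Integrable ℓ ν := hℓint β hβ
    have h2 : Integrable (fun x => ℓ x ^ 2) ν := hℓ2int β hβ
    have hgfst : Integrable (fun z : 𝒳 × 𝒳 => ℓ z.1) (ν.prod ν) := by
      simpa using h1.mul_prod (integrable_const (1:ℝ))
    have hgsnd : Integrable (fun z : 𝒳 × 𝒳 => ℓ z.2) (ν.prod ν) := by
      simpa using (integrable_const (1:ℝ)).mul_prod h1
    have hg : Integrable (fun z : 𝒳 × 𝒳 => ℓ z.1 - ℓ z.2) (ν.prod ν) := hgfst.sub hgsnd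
    have hfst2 : Integrable (fun z : 𝒳 × 𝒳 => ℓ z.1 ^ 2) (ν.prod ν) := by
      simpa using h2.mul_prod (integrable_const (1:ℝ))
    have hsnd2 : Integrable (fun z : 𝒳 × 𝒳 => ℓ z.2 ^ 2) (ν.prod ν) := by
      simpa using (integrable_const (1:ℝ)).mul_prod h2
    have hmul : Integrable (fun z : 𝒳 × 𝒳 => ℓ z.1 * ℓ z.2) (ν.prod ν) := h1.mul_prod h1
    have hg2 : Integrable (fun z : 𝒳 × 𝒳 => (ℓ z.1 - ℓ z.2) ^ 2) (ν.prod ν) := by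
      have e : (fun z : 𝒳 × 𝒳 => (ℓ z.1 - ℓ z.2) ^ 2)
          = fun z => (ℓ z.1 ^ 2 + ℓ z.2 ^ 2) - 2 * (ℓ z.1 * ℓ z.2) := by
        funext z; ring
      rw [e]
      have hadd : Integrable (fun z : 𝒳 × 𝒳 => ℓ z.1 ^ 2 + ℓ z.2 ^ 2) (ν.prod ν) :=
        hfst2.add hsnd2
      have hmul2 : Integrable (fun z : 𝒳 × 𝒳 => 2 * (ℓ z.1 * ℓ z.2)) (ν.prod ν) :=
        hmul.const_mul 2
      exact hadd.sub hmul2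
    have hiter : (∫ x, ∫ x', |ℓ x - ℓ x'| ∂ν ∂ν) = ∫ z, |ℓ z.1 - ℓ z.2| ∂(ν.prod ν) :=
      (integral_prod _ hg.abs).symm
    have i1 : ∫ z : 𝒳 × 𝒳, ℓ z.1 ^ 2 ∂(ν.prod ν) = ∫ x, ℓ x ^ 2 ∂ν := by
      have := integral_prod_mul (μ := ν) (ν := ν) (fun x => ℓ x ^ 2) (fun _ : 𝒳 => (1:ℝ))
      simpa using this
    have i2 : ∫ z : 𝒳 × 𝒳, ℓ z.2 ^ 2 ∂(ν.prod ν) = ∫ x, ℓ x ^ 2 ∂ν := by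
      have := integral_prod_mul (μ := ν) (ν := ν) (fun _ : 𝒳 => (1:ℝ)) (fun x => ℓ x ^ 2)
      simpa using this
    have i3 : ∫ z : 𝒳 × 𝒳, ℓ z.1 * ℓ z.2 ∂(ν.prod ν) = (∫ x, ℓ x ∂ν) * (∫ x, ℓ x ∂ν) :=
      integral_prod_mul ℓ ℓ
    have hval : ∫ z, (ℓ z.1 - ℓ z.2) ^ 2 ∂(ν.prod ν) = 2 * V β := by
      have e : (fun z : 𝒳 × 𝒳 => (ℓ z.1 - ℓ z.2) ^ 2)
          = fun z => (ℓ z.1 ^ 2 + ℓ z.2 ^ 2) - 2 * (ℓ z.1 * ℓ z.2) := by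
        funext z; ring
      have hadd : Integrable (fun z : 𝒳 × 𝒳 => ℓ z.1 ^ 2 + ℓ z.2 ^ 2) (ν.prod ν) :=
        hfst2.add hsnd2
      have hmul2 : Integrable (fun z : 𝒳 × 𝒳 => 2 * (ℓ z.1 * ℓ z.2)) (ν.prod ν) :=
        hmul.const_mul 2
      rw [e, integral_sub hadd hmul2, integral_add hfst2 hsnd2,
        integral_const_mul, i1, i2, i3, hEℓ β hβ, hEℓ2 β hβ]
      simp only [hVdef]
      ring
    have hcs := integral_le_sqrt_aux (ν.prod ν) hg.abs
      (by simpa [sq_abs] using hg2)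
    have habs2 : ∫ z, |ℓ z.1 - ℓ z.2| ^ 2 ∂(ν.prod ν) = 2 * V β := by
      rw [← hval]
      apply integral_congr_ae
      exact ae_of_all _ fun z => sq_abs _
    rw [hiter]
    rw [habs2] at hcs
    exact hcs
  -- derivatives of the moment functions
  have hderivN : ∀ (k : ℕ), k ≤ 2 → ∀ β ∈ Set.Ioo (0:ℝ) 1,
      HasDerivAt (N k) (N (k+1) β) β := by
    intro k hk β hβ
    have hεpos : 0 < min β (1 - β) := lt_min hβ.1 (by linarith [hβ.2])
    have hball : Metric.ball β (min β (1 - β)) ⊆ Set.Icc (0:ℝ) 1 := by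
      intro t ht
      rw [Metric.mem_ball, Real.dist_eq] at ht
      have h1 := abs_lt.mp ht
      have h2 := min_le_left β (1 - β)
      have h3 := min_le_right β (1 - β)
      constructor <;> [linarith; linarith]
    have hβIcc : β ∈ Set.Icc (0:ℝ) 1 := Set.mem_Icc_of_Ioo hβ
    have := hasDerivAt_integral_of_dominated_loc_of_deriv_le (Metric.ball_mem_nhds β hεpos)
      (F := fun t x => ℓ x ^ k * (p₀ x * Real.exp (t * ℓ x)))
      (F' := fun t x => ℓ x ^ (k+1) * (p₀ x * Real.exp (t * ℓ x)))
      (bound := M)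
      (Eventually.of_forall fun t => (hgmeas k t).aestronglyMeasurable)
      (hNint k (by omega) β hβIcc)
      ((hgmeas (k+1) β).aestronglyMeasurable)
      (ae_of_all _ fun x t ht => by
        rw [Real.norm_eq_abs]
        exact hbound (k+1) (by omega) t (hball ht) x)
      hMint
      (ae_of_all _ fun x t ht => by
        have hd1 : HasDerivAt (fun t : ℝ => t * ℓ x) (ℓ x) t := hasDerivAt_mul_const (ℓ x)
        have hd2 := hd1.exp
        have hd3 := (hd2.const_mul (p₀ x)).const_mul (ℓ x ^ k)
        exact hd3.congr_deriv (by ring))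
    exact this.2
  -- continuity of the moment functions
  have hNcont : ∀ (k : ℕ), k ≤ 3 → ContinuousOn (N k) (Set.Icc (0:ℝ) 1) := by
    intro k hk
    apply continuousOn_of_dominated (bound := M)
    · exact fun t _ => (hgmeas k t).aestronglyMeasurable
    · exact fun t ht => ae_of_all _ fun x => by
        rw [Real.norm_eq_abs]; exact hbound k hk t ht x
    · exact hMint
    · exact ae_of_all _ fun x => by
        apply Continuous.continuousOn
        fun_prop
  -- the mean function and FTC
  set m : ℝ → ℝ := fun β => N 1 β / N 0 β with hmdef
  have hmderiv : ∀ β ∈ Set.Ioo (0:ℝ) 1, HasDerivAt m (V β) β := by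
    intro β hβ
    have hβIcc : β ∈ Set.Icc (0:ℝ) 1 := Set.mem_Icc_of_Ioo hβ
    have h1 := hderivN 1 (by norm_num) β hβ
    have h0 := hderivN 0 (by norm_num) β hβ
    have hne : N 0 β ≠ 0 := (hN0pos β hβIcc).ne'
    have := h1.div h0 hne
    refine this.congr_deriv ?_
    simp only [hVdef]
    field_simp
  have hmcont : ContinuousOn m (Set.Icc (0:ℝ) 1) :=
    (hNcont 1 (by norm_num)).div (hNcont 0 (by norm_num))
      fun β hβ => (hN0pos β hβ).ne'
  have hVcont : ContinuousOn V (Set.Icc (0:ℝ) 1) := by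
    have h2 : ContinuousOn (fun β => N 2 β / N 0 β) (Set.Icc (0:ℝ) 1) :=
      (hNcont 2 (by norm_num)).div (hNcont 0 (by norm_num))
        fun β hβ => (hN0pos β hβ).ne'
    exact h2.sub (hmcont.pow 2)
  have hVintb : IntervalIntegrable V MeasureTheory.volume 0 1 := by
    apply ContinuousOn.intervalIntegrable
    rwa [Set.uIcc_of_le zero_le_one]
  have hftc : ∫ β in (0:ℝ)..1, V β = m 1 - m 0 :=
    intervalIntegral.integral_eq_sub_of_hasDeriv_right_of_le zero_le_one hmcont
      (fun β hβ => (hmderiv β hβ).hasDerivWithinAt) hVintb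
  -- endpoint values
  have hm1 : m 1 = ∫ x, ℓ x * p₁ x ∂μ := by
    have e0 : N 0 1 = 1 := by
      have : N 0 1 = ∫ x, p₁ x ∂μ := by
        rw [hN0eq 1]
        apply integral_congr_ae
        exact ae_of_all _ fun x => hp1 x
      rw [this, h1dens]
    have e1 : N 1 1 = ∫ x, ℓ x * p₁ x ∂μ := by
      have : (fun x => ℓ x ^ 1 * (p₀ x * Real.exp (1 * ℓ x))) = fun x => ℓ x * p₁ x := by
        funext x; rw [pow_one, hp1 x]
      simp only [hNdef, this]
    simp only [hmdef, e0, e1, div_one]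
  have hm0 : m 0 = ∫ x, ℓ x * p₀ x ∂μ := by
    have e0 : N 0 0 = 1 := by
      have : N 0 0 = ∫ x, p₀ x ∂μ := by
        rw [hN0eq 0]
        apply integral_congr_ae
        exact ae_of_all _ fun x => by simp
      rw [this, h0dens]
    have e1 : N 1 0 = ∫ x, ℓ x * p₀ x ∂μ := by
      have : (fun x => ℓ x ^ 1 * (p₀ x * Real.exp (0 * ℓ x))) = fun x => ℓ x * p₀ x := by
        funext x; simp
      simp only [hNdef, this]
    simp only [hmdef, e0, e1, div_one]
  set S := (∫ x, ℓ x * p₁ x ∂μ) - ∫ x, ℓ x * p₀ x ∂μ with hSdef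
  have hSV : ∫ β in (0:ℝ)..1, V β = S := by rw [hftc, hm1, hm0]
  -- case split on integrability of the inner double integral
  by_cases hI : IntervalIntegrable
      (fun β => ∫ x, ∫ x', |ℓ x - ℓ x'| ∂π β ∂π β) MeasureTheory.volume 0 1
  case neg =>
    rw [intervalIntegral.integral_undef hI, mul_zero]
    exact Real.sqrt_nonneg _
  case pos =>
    have hhcont : ContinuousOn (fun β => Real.sqrt (2 * V β)) (Set.Icc (0:ℝ) 1) :=
      Real.continuous_sqrt.comp_continuousOn (continuousOn_const.mul hVcont)
    have hhint : IntervalIntegrable (fun β => Real.sqrt (2 * V β)) MeasureTheory.volume 0 1 := by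
      apply ContinuousOn.intervalIntegrable
      rwa [Set.uIcc_of_le zero_le_one]
    have step1 : (∫ β in (0:ℝ)..1, ∫ x, ∫ x', |ℓ x - ℓ x'| ∂π β ∂π β)
        ≤ ∫ β in (0:ℝ)..1, Real.sqrt (2 * V β) :=
      intervalIntegral.integral_mono_on zero_le_one hI hhint fun β hβ => Ibound β hβ
    have step2 : (∫ β in (0:ℝ)..1, Real.sqrt (2 * V β)) ≤ Real.sqrt (2 * S) := by
      rw [intervalIntegral.integral_of_le zero_le_one]
      haveI : IsProbabilityMeasure (MeasureTheory.volume.restrict (Set.Ioc (0:ℝ) 1)) := by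
        constructor
        simp
      have hint1 : Integrable (fun β => Real.sqrt (2 * V β))
          (MeasureTheory.volume.restrict (Set.Ioc (0:ℝ) 1)) := by
        have := hhcont.integrableOn_Icc (μ := MeasureTheory.volume)
        exact this.mono_set Set.Ioc_subset_Icc_self
      have hint2 : Integrable (fun β => Real.sqrt (2 * V β) ^ 2)
          (MeasureTheory.volume.restrict (Set.Ioc (0:ℝ) 1)) := by
        have := (hhcont.pow 2).integrableOn_Icc (μ := MeasureTheory.volume)
        exact this.mono_set Set.Ioc_subset_Icc_self
      have hcs := integral_le_sqrt_aux (MeasureTheory.volume.restrict (Set.Ioc (0:ℝ) 1))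
        hint1 hint2
      refine hcs.trans (Real.sqrt_le_sqrt ?_)
      have e1 : ∫ β in Set.Ioc (0:ℝ) 1, Real.sqrt (2 * V β) ^ 2
          = ∫ β in Set.Ioc (0:ℝ) 1, 2 * V β := by
        apply setIntegral_congr_fun measurableSet_Ioc
        intro β hβ
        have hβIcc : β ∈ Set.Icc (0:ℝ) 1 := Set.Ioc_subset_Icc_self hβ
        exact Real.sq_sqrt (by linarith [hVnn β hβIcc])
      rw [e1]
      have e2 : ∫ β in Set.Ioc (0:ℝ) 1, 2 * V β = 2 * S := by
        rw [← intervalIntegral.integral_of_le zero_le_one, intervalIntegral.integral_const_mul,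
          hSV]
      rw [e2]
    have final : (∫ β in (0:ℝ)..1, ∫ x, ∫ x', |ℓ x - ℓ x'| ∂π β ∂π β) ≤ Real.sqrt (2 * S) :=
      step1.trans step2
    have heq : (1/2 : ℝ) * Real.sqrt (2 * S) = Real.sqrt ((1/2) * S) := by
      rw [show (1/2 : ℝ) * S = (1/2)^2 * (2 * S) by ring, Real.sqrt_mul (sq_nonneg _),
        Real.sqrt_sq (by norm_num)]
    rw [← heq]
    linarith
end

section
/- Closed form for the expected hitting time recursion in PT with two references (Lemma 'target_to_reference'): Let N̄ ≥ 1 and r_1, …, r_{N̄} ∈ [0, 1). Suppose real numbers A_{n,+} and A_{n,−} for n = 0, 1, …, N̄ satisfy, for all 1 ≤ n ≤ N̄, the recursions A_{n,+} − A_{n−1,+} = r_n (A_{n,+} − A_{n−1,−}) − 1 and A_{n,−} − A_{n−1,−} = r_n (A_{n,+} − A_{n−1,−}) + 1, together with the boundary conditions A_{0,−} = 0 and A_{N̄,+} = 1 + A_{N̄,−}. Then for every 1 ≤ N_φ ≤ N̄, A_{N_φ,+} = 2(N̄ + 1) − (N_φ + 1) + 2 Σ_{n=1}^{N_φ} (N̄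 + 1 − n) · r_n / (1 − r_n). -/
open Finset

/-- Closed form for the expected hitting time recursion in PT with two references:
if `A_{n,+}` and `A_{n,−}` satisfy the recursions
`A_{n,+} − A_{n−1,+} = r_n (A_{n,+} − A_{n−1,−}) − 1` and
`A_{n,−} − A_{n−1,−} = r_n (A_{n,+} − A_{n−1,−}) + 1` for `1 ≤ n ≤ N̄`, with boundary
conditions `A_{0,−} = 0` and `A_{N̄,+} = 1 + A_{N̄,−}`, then for every `1 ≤ N_φ ≤ N̄`,
`A_{N_φ,+} = 2(N̄ + 1) − (N_φ + 1) + 2 Σ_{n=1}^{N_φ} (N̄ + 1 − n) r_n/(1 − r_n)`. -/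
theorem stmt_15 (Nbar : ℕ) (hNbar : 1 ≤ Nbar)
    (r : ℕ → ℝ) (hr : ∀ n, 1 ≤ n → n ≤ Nbar → r n ∈ Set.Ico (0 : ℝ) 1)
    (Ap Am : ℕ → ℝ)
    (hrec1 : ∀ n, 1 ≤ n → n ≤ Nbar →
      Ap n - Ap (n - 1) = r n * (Ap n - Am (n - 1)) - 1)
    (hrec2 : ∀ n, 1 ≤ n → n ≤ Nbar →
      Am n - Am (n - 1) = r n * (Ap n - Am (n - 1)) + 1)
    (hbdry1 : Am 0 = 0) (hbdry2 : Ap Nbar = 1 + Am Nbar)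
    (Nphi : ℕ) (h1 : 1 ≤ Nphi) (h2 : Nphi ≤ Nbar) :
    Ap Nphi = 2 * ((Nbar : ℝ) + 1) - ((Nphi : ℝ) + 1) +
      2 * ∑ n ∈ Finset.Icc 1 Nphi, ((Nbar : ℝ) + 1 - (n : ℝ)) * (r n / (1 - r n)) := by
  -- Step 1: the difference D k = Ap k - Am k satisfies D k = Ap 0 - 2k.
  have hdiff : ∀ k, k ≤ Nbar → Ap k - Am k = Ap 0 - 2 * (k : ℝ) := by
    intro k
    induction k with
    | zero => intro _; simp [hbdry1]
    | succ m ih =>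
      intro hk
      have hm : m ≤ Nbar := Nat.le_of_succ_le hk
      have e1 := hrec1 (m + 1) (Nat.le_add_left 1 m) hk
      have e2 := hrec2 (m + 1) (Nat.le_add_left 1 m) hk
      simp only [Nat.add_sub_cancel] at e1 e2
      have := ih hm
      push_cast
      linarith
  -- Step 2: Ap 0 = 2 * Nbar + 1.
  have hAp0 : Ap 0 = 2 * (Nbar : ℝ) + 1 := by
    have := hdiff Nbar le_rfl
    linarith
  -- Step 3: Ap n - Am (n-1) = 2 (Nbar + 1 - n) / (1 - r n) for 1 ≤ n ≤ Nbar.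
  have hB : ∀ n, 1 ≤ n → n ≤ Nbar →
      (1 - r n) * (Ap n - Am (n - 1)) = 2 * ((Nbar : ℝ) + 1 - (n : ℝ)) := by
    intro n hn1 hn2
    have e2 := hrec2 n hn1 hn2
    have hd := hdiff n hn2
    have hd' : Ap n - Am n = 2 * (Nbar : ℝ) + 1 - 2 * (n : ℝ) := by
      rw [hd, hAp0]
    nlinarith [e2, hd']
  -- Step 4: main induction giving the closed form for all k ≤ Nbar (incl. k = 0).
  have main : ∀ k, k ≤ Nbar →
      Ap k = 2 * ((Nbar : ℝ) + 1) - ((k : ℝ) + 1) +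
        2 * ∑ n ∈ Finset.Icc 1 k, ((Nbar : ℝ) + 1 - (n : ℝ)) * (r n / (1 - r n)) := by
    intro k
    induction k with
    | zero => intro _; simp [hAp0]; ring
    | succ m ih =>
      intro hk
      have hm : m ≤ Nbar := Nat.le_of_succ_le hk
      have e1 := hrec1 (m + 1) (Nat.le_add_left 1 m) hk
      simp only [Nat.add_sub_cancel] at e1
      have hBv := hB (m + 1) (Nat.le_add_left 1 m) hk
      simp only [Nat.add_sub_cancel] at hBv
      push_cast at hBv
      have hrlt : r (m + 1) < 1 := (hr (m + 1) (Nat.le_add_left 1 m) hk).2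
      have hne : (1 : ℝ) - r (m + 1) ≠ 0 := by linarith
      have hBval : Ap (m + 1) - Am m =
          2 * ((Nbar : ℝ) + 1 - ((m : ℝ) + 1)) / (1 - r (m + 1)) := by
        field_simp
        linarith [hBv]
      have hsum : ∑ n ∈ Finset.Icc 1 (m + 1), ((Nbar : ℝ) + 1 - (n : ℝ)) * (r n / (1 - r n))
          = (∑ n ∈ Finset.Icc 1 m, ((Nbar : ℝ) + 1 - (n : ℝ)) * (r n / (1 - r n)))
            + ((Nbar : ℝ) + 1 - ((m + 1 : ℕ) : ℝ)) * (r (m + 1) / (1 - r (m + 1))) := by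
        rw [Finset.sum_Icc_succ_top (Nat.le_add_left 1 m)]
      have hterm : r (m + 1) * (Ap (m + 1) - Am m)
          = 2 * ((Nbar : ℝ) + 1 - ((m : ℝ) + 1)) * (r (m + 1) / (1 - r (m + 1))) := by
        rw [hBval]; field_simp
      have ihm := ih hm
      rw [hsum]
      push_cast
      push_cast at ihm
      linarith [e1, hterm, ihm]
  exact main Nphi h2
end
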